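/- arXiv:math/0506605 — 2 statements merged into one kernel-verified Lean document; each statement's English description precedes it below -/
import Mathlib

section
/- For all f, g ∈ C^∞(ℂⁿ) and all m ∈ ℕ, 0 ≤ ℓ ≤ 2^m−1, R, S ∈ ℕⁿ, the pointwise product satisfies ‖f·g‖^{p,ℏ}_{m,ℓ,R,S} ≤ ‖f‖^{p,ℏ}_{m+1,ℓ,R,S} · ‖g‖^{p,ℏ}_{m+1,ℓ,R,S} (inequality in [0,∞]). In particular Ã_{p,ℏ} is closed under pointwise multiplication. -/
open scoped ENNReal NNReal BigOperators
open Complex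

noncomputable section

namespace WickPaper

/-- functions on ℂⁿ -/
abbrev Fn (n : ℕ) := (Fin n → ℂ) → ℂ

/-- |N| = N₁+⋯+Nₙ -/
def mAbs {n : ℕ} (N : Fin n → ℕ) : ℕ := ∑ i, N i

/-- N! = N₁!⋯Nₙ! -/
def mFact {n : ℕ} (N : Fin n → ℕ) : ℕ := ∏ i, Nat.factorial (N i)

/-- componentwise binomial coefficient -/
def mChoose {n : ℕ} (R I : Fin n → ℕ) : ℕ := ∏ i, Nat.choose (R i) (I i)

/-- Wirtinger derivative ∂/∂zᵢ -/
def wderivZ {n : ℕ} (i : Fin n) (f : Fn n) : Fn n :=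
  fun z => (1/2 : ℂ) *
    (fderiv ℝ f z (Pi.single i 1) - Complex.I * fderiv ℝ f z (Pi.single i Complex.I))

/-- Wirtinger derivative ∂/∂z̄ᵢ -/
def wderivZbar {n : ℕ} (i : Fin n) (f : Fn n) : Fn n :=
  fun z => (1/2 : ℂ) *
    (fderiv ℝ f z (Pi.single i 1) + Complex.I * fderiv ℝ f z (Pi.single i Complex.I))

/-- ∂^{|R|}/∂z^R -/
def wIterZ {n : ℕ} (R : Fin n → ℕ) (f : Fn n) : Fn n :=
  (List.finRange n).foldr (fun i g => (wderivZ i)^[R i] g) f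

/-- ∂^{|S|}/∂z̄^S -/
def wIterZbar {n : ℕ} (S : Fin n → ℕ) (f : Fn n) : Fn n :=
  (List.finRange n).foldr (fun i g => (wderivZbar i)^[S i] g) f

/-- iterated Wirtinger derivative ∂^{|R|+|S|} f/(∂z^R ∂z̄^S) -/
def wD {n : ℕ} (R S : Fin n → ℕ) (f : Fn n) : Fn n :=
  wIterZ R (wIterZbar S f)

/-- the base quantity h^{p,ℏ}_{0,0,R,S}(f) -/
def h0 {n : ℕ} (p : Fin n → ℂ) (ℏ : ℝ) (R S : Fin n → ℕ) (f : Fn n) : ℝ≥0∞ :=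
  ∑' N : Fin n → ℕ,
    ENNReal.ofReal ((2*ℏ)^(mAbs R + mAbs S + mAbs N)) / (mFact N : ℝ≥0∞) *
      (‖wD R (N + S) f p‖₊ : ℝ≥0∞)^2

/-- the recursively defined quantities h^{p,ℏ}_{m,ℓ,R,S}(f) ∈ [0,∞] -/
def hSem {n : ℕ} (p : Fin n → ℂ) (ℏ : ℝ) : ℕ → ℕ → (Fin n → ℕ) → (Fin n → ℕ) → Fn n → ℝ≥0∞
  | 0, _, R, S, f => h0 p ℏ R S f
  | (m+1), ℓ, R, S, f =>
    if ℓ % 2 = 0 then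
      ∑' N : Fin n → ℕ, (mFact N : ℝ≥0∞)⁻¹ *
        (∑ I ∈ Finset.Iic R, ∑ J ∈ Finset.Iic (N + S),
          ((mChoose R I * mChoose (N + S) J : ℕ) : ℝ≥0∞) * hSem p ℏ m (ℓ / 2) I J f) ^ 2
    else
      ∑' N : Fin n → ℕ, (mFact N : ℝ≥0∞)⁻¹ *
        (∑ I ∈ Finset.Iic R, ∑ J ∈ Finset.Iic (N + S),
          ((mChoose R I * mChoose (N + S) J : ℕ) : ℝ≥0∞) * hSem p ℏ m ((ℓ - 1) / 2) J I f) ^ 2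

/-- the seminorm ‖f‖^{p,ℏ}_{m,ℓ,R,S} = (h^{p,ℏ}_{m,ℓ,R,S}(f))^{1/2^{m+1}} ∈ [0,∞] -/
def wNorm {n : ℕ} (p : Fin n → ℂ) (ℏ : ℝ) (m ℓ : ℕ) (R S : Fin n → ℕ) (f : Fn n) : ℝ≥0∞ :=
  hSem p ℏ m ℓ R S f ^ (((2:ℝ)^(m+1))⁻¹)

/-- Ã_{p,ℏ}: smooth functions all of whose seminorms are finite -/
def tA {n : ℕ} (p : Fin n → ℂ) (ℏ : ℝ) : Set (Fn n) :=
  {f | ContDiff ℝ (⊤ : ℕ∞) f ∧ ∀ (m ℓ : ℕ) (R S : Fin n → ℕ), ℓ < 2^m → wNorm p ℏ m ℓ R S f < ⊤}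

/-- a single term of the Wick product series -/
def wickTerm {n : ℕ} (α : ℂ) (N : Fin n → ℕ) (f g : Fn n) : Fn n :=
  fun z => (2*α)^(mAbs N) / (mFact N : ℂ) * wIterZ N f z * wIterZbar N g z

/-- the Wick product f ⋆_α g -/
def wick {n : ℕ} (α : ℂ) (f g : Fn n) : Fn n :=
  fun z => ∑' N : Fin n → ℕ, wickTerm α N f g z




set_option maxHeartbeats 2000000

section CS
open MeasureTheory
lemma sq_rpow_half (x : ℝ≥0∞) : (x ^ 2) ^ (1/2:ℝ) = x := by
  rw [← ENNReal.rpow_natCast x 2, ← ENNReal.rpow_mul]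
  norm_num

lemma rpow_half_sq (x : ℝ≥0∞) : (x ^ (1/2:ℝ)) ^ 2 = x := by
  rw [← ENNReal.rpow_natCast (x ^ (1/2:ℝ)) 2, ← ENNReal.rpow_mul]
  norm_num

lemma mul_rpow_half (x y : ℝ≥0∞) : (x * y) ^ (1/2:ℝ) = x ^ (1/2:ℝ) * y ^ (1/2:ℝ) :=
  ENNReal.mul_rpow_of_nonneg x y (by norm_num)

lemma cs_tsum {α : Type*} [Countable α] (u v : α → ℝ≥0∞) :
    (∑' i, (u i * v i) ^ (1/2:ℝ)) ≤ (∑' i, u i) ^ (1/2:ℝ) * (∑' i, v i) ^ (1/2:ℝ) := by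
  letI : MeasurableSpace α := ⊤
  haveI : MeasurableSingletonClass α := ⟨fun _ => trivial⟩
  have h := ENNReal.lintegral_mul_le_Lp_mul_Lq (Measure.count (α := α))
    (p := 2) (q := 2) ⟨by norm_num, by norm_num, by norm_num⟩
    (f := fun i => u i ^ (1/2:ℝ)) (g := fun i => v i ^ (1/2:ℝ))
    (measurable_of_countable _).aemeasurable (measurable_of_countable _).aemeasurable
  have e : ∀ x : ℝ≥0∞, (x ^ (1/2:ℝ)) ^ (2:ℝ) = x := fun x => by
    rw [← ENNReal.rpow_mul]; norm_num
  simp only [Pi.mul_apply, lintegral_count, e] at h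
  calc (∑' i, (u i * v i) ^ (1/2:ℝ)) = ∑' i, u i ^ (1/2:ℝ) * v i ^ (1/2:ℝ) := by
        exact tsum_congr fun i => mul_rpow_half _ _
    _ ≤ _ := h

lemma cs_finset {ι : Type*} (t : Finset ι) (u v : ι → ℝ≥0∞) :
    (∑ i ∈ t, (u i * v i) ^ (1/2:ℝ)) ≤ (∑ i ∈ t, u i) ^ (1/2:ℝ) * (∑ i ∈ t, v i) ^ (1/2:ℝ) := by
  rw [← Finset.tsum_subtype t (fun i => (u i * v i) ^ (1/2:ℝ)),
    ← Finset.tsum_subtype t u, ← Finset.tsum_subtype t v]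
  exact cs_tsum _ _

/-- main Cauchy–Schwarz step for the recursion -/
lemma main_cs {α : Type*} [Countable α] {β : Type*} (w : α → ℝ≥0∞) (t : α → Finset β)
    (c φ x y : α → β → ℝ≥0∞)
    (hφ : ∀ N, ∀ b ∈ t N, φ N b ≤ (x N b * y N b) ^ (1/2:ℝ)) :
    (∑' N, w N * (∑ b ∈ t N, c N b * φ N b) ^ 2) ≤
      ((∑' N, w N * (∑ b ∈ t N, c N b * x N b) ^ 2) *
       (∑' N, w N * (∑ b ∈ t N, c N b * y N b) ^ 2)) ^ (1/2:ℝ) := by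
  have hinner : ∀ N, (∑ b ∈ t N, c N b * φ N b) ≤
      (∑ b ∈ t N, c N b * x N b) ^ (1/2:ℝ) * (∑ b ∈ t N, c N b * y N b) ^ (1/2:ℝ) := by
    intro N
    calc (∑ b ∈ t N, c N b * φ N b)
        ≤ ∑ b ∈ t N, ((c N b * x N b) * (c N b * y N b)) ^ (1/2:ℝ) := by
          refine Finset.sum_le_sum fun b hb => ?_
          calc c N b * φ N b ≤ c N b * (x N b * y N b) ^ (1/2:ℝ) :=
                mul_le_mul_right (hφ N b hb) _
            _ = ((c N b * x N b) * (c N b * y N b)) ^ (1/2:ℝ) := by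
                rw [show (c N b * x N b) * (c N b * y N b)
                    = (c N b)^2 * (x N b * y N b) from by ring]
                conv_rhs => rw [mul_rpow_half, sq_rpow_half]
      _ ≤ _ := cs_finset _ _ _
  calc (∑' N, w N * (∑ b ∈ t N, c N b * φ N b) ^ 2)
      ≤ ∑' N, ((w N * (∑ b ∈ t N, c N b * x N b) ^ 2) *
          (w N * (∑ b ∈ t N, c N b * y N b) ^ 2)) ^ (1/2:ℝ) := by
        refine ENNReal.tsum_le_tsum fun N => ?_
        calc w N * (∑ b ∈ t N, c N b * φ N b) ^ 2
            ≤ w N * ((∑ b ∈ t N, c N b * x N b) ^ (1/2:ℝ)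
                * (∑ b ∈ t N, c N b * y N b) ^ (1/2:ℝ)) ^ 2 :=
              mul_le_mul_right (pow_le_pow_left' (hinner N) 2) _
          _ = ((w N * (∑ b ∈ t N, c N b * x N b) ^ 2) *
              (w N * (∑ b ∈ t N, c N b * y N b) ^ 2)) ^ (1/2:ℝ) := by
              rw [show (w N * (∑ b ∈ t N, c N b * x N b) ^ 2) *
                  (w N * (∑ b ∈ t N, c N b * y N b) ^ 2)
                  = (w N * ((∑ b ∈ t N, c N b * x N b)
                    * (∑ b ∈ t N, c N b * y N b))) ^ 2 from by ring,
                sq_rpow_half, mul_pow, rpow_half_sq, rpow_half_sq]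
    _ ≤ (∑' N, w N * (∑ b ∈ t N, c N b * x N b) ^ 2) ^ (1/2:ℝ) *
        (∑' N, w N * (∑ b ∈ t N, c N b * y N b) ^ 2) ^ (1/2:ℝ) := cs_tsum _ _
    _ = _ := (mul_rpow_half _ _).symm
end CS

structure IsWD {n : ℕ} (D : Fn n → Fn n) : Prop where
  smooth : ∀ f : Fn n, ContDiff ℝ (⊤ : ℕ∞) f → ContDiff ℝ (⊤ : ℕ∞) (D f)
  mul : ∀ f g : Fn n, ContDiff ℝ (⊤ : ℕ∞) f → ContDiff ℝ (⊤ : ℕ∞) g →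
    D (fun z => f z * g z) = fun z => D f z * g z + f z * D g z
  add : ∀ f g : Fn n, ContDiff ℝ (⊤ : ℕ∞) f → ContDiff ℝ (⊤ : ℕ∞) g →
    D (fun z => f z + g z) = fun z => D f z + D g z
  cmul : ∀ (c : ℂ) (f : Fn n), ContDiff ℝ (⊤ : ℕ∞) f → D (fun z => c * f z) = fun z => c * D f z
  zero : D (fun _ => 0) = fun _ => 0

section basic
variable {n : ℕ}

lemma aux_smooth (v : Fin n → ℂ) (f : Fn n) (hf : ContDiff ℝ (⊤ : ℕ∞) f) :
    ContDiff ℝ (⊤ : ℕ∞) (fun z => fderiv ℝ f z v) :=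
  (hf.fderiv_right (by simp)).clm_apply contDiff_const

lemma aux_mul (v : Fin n → ℂ) (f g : Fn n) (hf : ContDiff ℝ (⊤ : ℕ∞) f) (hg : ContDiff ℝ (⊤ : ℕ∞) g) (z) :
    fderiv ℝ (fun z => f z * g z) z v = fderiv ℝ f z v * g z + f z * fderiv ℝ g z v := by
  rw [fderiv_fun_mul ((hf.differentiable (by simp)) z) ((hg.differentiable (by simp)) z)]
  simp only [ContinuousLinearMap.add_apply, ContinuousLinearMap.smul_apply, smul_eq_mul]; ring

lemma aux_add (v : Fin n → ℂ) (f g : Fn n) (hf : ContDiff ℝ (⊤ : ℕ∞) f) (hg : ContDiff ℝ (⊤ : ℕ∞) g) (z) :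
    fderiv ℝ (fun z => f z + g z) z v = fderiv ℝ f z v + fderiv ℝ g z v := by
  rw [fderiv_fun_add ((hf.differentiable (by simp)) z) ((hg.differentiable (by simp)) z)]; simp

lemma aux_cmul (v : Fin n → ℂ) (c : ℂ) (f : Fn n) (hf : ContDiff ℝ (⊤ : ℕ∞) f) (z) :
    fderiv ℝ (fun z => c * f z) z v = c * fderiv ℝ f z v := by
  rw [fderiv_const_mul ((hf.differentiable (by simp)) z) c]; simp

lemma isWD_wderivZ (i : Fin n) : IsWD (wderivZ i) where
  smooth f hf := contDiff_const.mul ((aux_smooth _ f hf).sub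
      (contDiff_const.mul (aux_smooth _ f hf)))
  mul f g hf hg := by
    funext z; simp only [wderivZ, aux_mul _ f g hf hg]; ring
  add f g hf hg := by
    funext z; simp only [wderivZ, aux_add _ f g hf hg]; ring
  cmul c f hf := by
    funext z; simp only [wderivZ, aux_cmul _ c f hf]; ring
  zero := by funext z; simp [wderivZ]

lemma isWD_wderivZbar (i : Fin n) : IsWD (wderivZbar i) where
  smooth f hf := contDiff_const.mul ((aux_smooth _ f hf).add
      (contDiff_const.mul (aux_smooth _ f hf)))
  mul f g hf hg := by
    funext z; simp only [wderivZbar, aux_mul _ f g hf hg]; ring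
  add f g hf hg := by
    funext z; simp only [wderivZbar, aux_add _ f g hf hg]; ring
  cmul c f hf := by
    funext z; simp only [wderivZbar, aux_cmul _ c f hf]; ring
  zero := by funext z; simp [wderivZbar]

end basic

namespace IsWD
variable {n : ℕ} {D : Fn n → Fn n}

lemma sum (hD : IsWD D) {ι : Type*} (t : Finset ι) (F : ι → Fn n) (hF : ∀ i ∈ t, ContDiff ℝ (⊤ : ℕ∞) (F i)) :
    D (fun z => ∑ i ∈ t, F i z) = fun z => ∑ i ∈ t, D (F i) z := by
  classical
  induction t using Finset.induction with
  | empty => simpa using hD.zero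
  | @insert a s ha ih =>
    have hs : ∀ i ∈ s, ContDiff ℝ (⊤ : ℕ∞) (F i) := fun i hi => hF i (Finset.mem_insert_of_mem hi)
    have h1 : D (fun z => F a z + ∑ i ∈ s, F i z) = fun z => D (F a) z + D (fun z => ∑ i ∈ s, F i z) z :=
      hD.add _ _ (hF a (Finset.mem_insert_self a s)) (ContDiff.sum hs)
    simp only [Finset.sum_insert ha]
    rw [h1, ih hs]

lemma iter_smooth (hD : IsWD D) (k : ℕ) (f : Fn n) (hf : ContDiff ℝ (⊤ : ℕ∞) f) : ContDiff ℝ (⊤ : ℕ∞) (D^[k] f) := by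
  induction k with
  | zero => simpa
  | succ k ih => rw [Function.iterate_succ_apply']; exact hD.smooth _ ih

lemma iter_cmul (hD : IsWD D) (k : ℕ) (c : ℂ) (f : Fn n) (hf : ContDiff ℝ (⊤ : ℕ∞) f) :
    D^[k] (fun z => c * f z) = fun z => c * D^[k] f z := by
  induction k with
  | zero => rfl
  | succ k ih =>
    rw [Function.iterate_succ_apply', ih, Function.iterate_succ_apply']
    exact hD.cmul c _ (hD.iter_smooth k f hf)

lemma iter_sum (hD : IsWD D) (k : ℕ) {ι : Type} (t : Finset ι) (F : ι → Fn n)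
    (hF : ∀ i ∈ t, ContDiff ℝ (⊤ : ℕ∞) (F i)) :
    D^[k] (fun z => ∑ i ∈ t, F i z) = fun z => ∑ i ∈ t, D^[k] (F i) z := by
  induction k with
  | zero => rfl
  | succ k ih =>
    rw [Function.iterate_succ_apply', ih, hD.sum _ _ fun i hi => hD.iter_smooth k (F i) (hF i hi)]
    funext z
    exact Finset.sum_congr rfl fun i _ => by rw [Function.iterate_succ_apply']

/-- binomial Leibniz rule for iterates -/
lemma iter_mul (hD : IsWD D) (k : ℕ) (f g : Fn n) (hf : ContDiff ℝ (⊤ : ℕ∞) f) (hg : ContDiff ℝ (⊤ : ℕ∞) g) :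
    D^[k] (fun z => f z * g z) =
      fun z => ∑ j ∈ Finset.range (k+1), (k.choose j : ℂ) * (D^[j] f z * D^[k-j] g z) := by
  induction k with
  | zero => simp
  | succ k ih =>
    rw [Function.iterate_succ_apply', ih]
    have hsm : ∀ j ∈ Finset.range (k+1),
        ContDiff ℝ (⊤ : ℕ∞) (fun z => (k.choose j : ℂ) * (D^[j] f z * D^[k-j] g z)) := by
      intro j _
      exact contDiff_const.mul ((hD.iter_smooth j f hf).mul (hD.iter_smooth (k-j) g hg))
    rw [hD.sum _ _ hsm]
    funext z
    have hterm : ∀ j ∈ Finset.range (k+1),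
        D (fun z => (k.choose j : ℂ) * (D^[j] f z * D^[k-j] g z)) z =
          (k.choose j : ℂ) * (D (D^[j] f) z * D^[k-j] g z + D^[j] f z * D (D^[k-j] g) z) := by
      intro j _
      rw [hD.cmul _ _ ((hD.iter_smooth j f hf).mul (hD.iter_smooth (k-j) g hg)),
        hD.mul _ _ (hD.iter_smooth j f hf) (hD.iter_smooth (k-j) g hg)]
    rw [Finset.sum_congr rfl hterm]
    -- now pure algebra with sums
    have hDf : ∀ j, D (D^[j] f) z = D^[j+1] f z := fun j => by
      rw [Function.iterate_succ_apply']
    have hDg : ∀ j, D (D^[k-j] g) z = D^[(k-j)+1] g z := fun j => by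
      rw [Function.iterate_succ_apply']
    simp only [mul_add, Finset.sum_add_distrib, hDf, hDg]
    -- s1 + s2 = target
    have e2 : ∀ j ∈ Finset.range (k+1), (k.choose j : ℂ) * (D^[j] f z * D^[k-j+1] g z)
        = (k.choose j : ℂ) * (D^[j] f z * D^[k+1-j] g z) := by
      intro j hj
      rw [Finset.mem_range] at hj
      rw [Nat.sub_add_comm (by omega)]
    rw [Finset.sum_congr rfl e2]
    -- target: ∑_{j∈range(k+2)} C(k+1,j) F_j G_{k+1-j}
    rw [Finset.sum_range_succ' (fun j => ((k+1).choose j : ℂ) * (D^[j] f z * D^[k+1-j] g z)) (k+1)]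
    have e3 : ∀ j ∈ Finset.range (k+1), ((k+1).choose (j+1) : ℂ) * (D^[j+1] f z * D^[k+1-(j+1)] g z)
        = (k.choose j : ℂ) * (D^[j+1] f z * D^[k-j] g z)
          + (k.choose (j+1) : ℂ) * (D^[j+1] f z * D^[k-j] g z) := by
      intro j hj
      rw [Nat.choose_succ_succ k j, show k+1-(j+1) = k-j from by omega]
      push_cast; ring
    rw [Finset.sum_congr rfl e3, Finset.sum_add_distrib]
    -- now: s1' + s2' + c0 = s1 + s2''
    have e4 : (∑ j ∈ Finset.range (k+1), (k.choose (j+1) : ℂ) * (D^[j+1] f z * D^[k-j] g z))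
        + ((k+1).choose 0 : ℂ) * (D^[0] f z * D^[k+1-0] g z)
        = ∑ j ∈ Finset.range (k+1), (k.choose j : ℂ) * (D^[j] f z * D^[k+1-j] g z) := by
      rw [Finset.sum_range_succ' (fun j => (k.choose j : ℂ) * (D^[j] f z * D^[k+1-j] g z)) k]
      congr 1
      · rw [Finset.sum_range_succ]
        simp only [Nat.choose_succ_self, Nat.cast_zero, zero_mul, add_zero]
        refine Finset.sum_congr rfl fun j hj => ?_
        rw [Finset.mem_range] at hj
        have : k+1-(j+1) = k - j := by omega
        rw [this]
      · simp
    rw [add_assoc, e4]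
end IsWD

section secC
variable {n : ℕ} {D : Fin n → Fn n → Fn n}

def opFold (D : Fin n → Fn n → Fn n) (L : List (Fin n)) (R : Fin n → ℕ) (f : Fn n) : Fn n :=
  L.foldr (fun i g => (D i)^[R i] g) f

lemma opFold_nil {R f} : opFold D [] R f = f := rfl
lemma opFold_cons {i L R f} : opFold D (i :: L) R f = (D i)^[R i] (opFold D L R f) := rfl

lemma opFold_smooth (hD : ∀ i, IsWD (D i)) (L : List (Fin n)) (R : Fin n → ℕ) (f : Fn n)
    (hf : ContDiff ℝ (⊤ : ℕ∞) f) : ContDiff ℝ (⊤ : ℕ∞) (opFold D L R f) := by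
  induction L with
  | nil => exact hf
  | cons i L ih => exact (hD i).iter_smooth _ _ ih

lemma opFold_congr (L : List (Fin n)) {R R' : Fin n → ℕ} (f : Fn n)
    (h : ∀ i ∈ L, R i = R' i) : opFold D L R f = opFold D L R' f := by
  induction L with
  | nil => rfl
  | cons i L ih =>
    rw [opFold_cons, opFold_cons, h i (List.mem_cons_self),
      ih fun j hj => h j (List.mem_cons_of_mem i hj)]

lemma opFold_sum (hD : ∀ i, IsWD (D i)) (L : List (Fin n)) (R : Fin n → ℕ) {ι : Type}
    (t : Finset ι) (F : ι → Fn n) (hF : ∀ i ∈ t, ContDiff ℝ (⊤ : ℕ∞) (F i)) :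
    opFold D L R (fun z => ∑ i ∈ t, F i z) = fun z => ∑ i ∈ t, opFold D L R (F i) z := by
  induction L with
  | nil => rfl
  | cons i L ih =>
    rw [opFold_cons, ih, (hD i).iter_sum _ _ _ fun j hj => opFold_smooth hD _ _ _ (hF j hj)]
    rfl

/-- the multi-index Leibniz rule along a duplicate-free list of coordinates -/
lemma opFold_mul (hD : ∀ i, IsWD (D i)) (L : List (Fin n)) (hL : L.Nodup) (R : Fin n → ℕ)
    (f g : Fn n) (hf : ContDiff ℝ (⊤ : ℕ∞) f) (hg : ContDiff ℝ (⊤ : ℕ∞) g) :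
    opFold D L R (fun z => f z * g z) = fun z =>
      ∑ I ∈ (Finset.Iic R).filter (fun I => ∀ j, j ∉ L → I j = 0),
        ((L.map fun l => (R l).choose (I l)).prod : ℂ) *
          (opFold D L I f z * opFold D L (R - I) g z) := by
  induction L generalizing R with
  | nil =>
    have hset : (Finset.Iic R).filter (fun I => ∀ j, j ∉ ([] : List (Fin n)) → I j = 0)
        = {0} := by
      ext I
      simp only [Finset.mem_filter, Finset.mem_Iic, Finset.mem_singleton, List.not_mem_nil,
        not_false_iff, forall_true_left]
      constructor
      · rintro ⟨-, h⟩; exact funext h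
      · rintro rfl; exact ⟨fun i => Nat.zero_le _, fun j => rfl⟩
    rw [hset]
    funext z
    rw [Finset.sum_singleton]
    simp [opFold_nil]
  | cons i L ih =>
    have hiL : i ∉ L := (List.nodup_cons.mp hL).1
    have hLnd : L.Nodup := (List.nodup_cons.mp hL).2
    rw [opFold_cons, ih hLnd R]
    set sL := (Finset.Iic R).filter (fun I => ∀ j, j ∉ L → I j = 0) with hsL
    have hsm : ∀ I' ∈ sL, ContDiff ℝ (⊤ : ℕ∞)
        (fun z => ((L.map fun l => (R l).choose (I' l)).prod : ℂ) *
          (opFold D L I' f z * opFold D L (R - I') g z)) := fun I' _ =>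
      contDiff_const.mul ((opFold_smooth hD _ _ _ hf).mul (opFold_smooth hD _ _ _ hg))
    rw [(hD i).iter_sum _ _ _ hsm]
    funext z
    have hterm : ∀ I' ∈ sL,
        (D i)^[R i] (fun z => ((L.map fun l => (R l).choose (I' l)).prod : ℂ) *
            (opFold D L I' f z * opFold D L (R - I') g z)) z
        = ∑ j ∈ Finset.range (R i + 1),
            (((R i).choose j : ℂ) * ((L.map fun l => (R l).choose (I' l)).prod : ℂ)) *
            ((D i)^[j] (opFold D L I' f) z * (D i)^[R i - j] (opFold D L (R - I') g) z) := by
      intro I' _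
      rw [(hD i).iter_cmul _ _ _ ((opFold_smooth hD _ _ _ hf).mul (opFold_smooth hD _ _ _ hg)),
        (hD i).iter_mul _ _ _ (opFold_smooth hD _ _ _ hf) (opFold_smooth hD _ _ _ hg)]
      beta_reduce
      rw [Finset.mul_sum]
      exact Finset.sum_congr rfl fun j _ => by ring
    rw [Finset.sum_congr rfl hterm]
    rw [← Finset.sum_product']
    refine Finset.sum_nbij' (i := fun x => Function.update x.1 i x.2)
      (j := fun I => (Function.update I i 0, I i)) ?_ ?_ ?_ ?_ ?_
    · rintro ⟨I', j⟩ hx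
      rw [Finset.mem_product] at hx
      obtain ⟨hI', hj⟩ := hx
      rw [hsL, Finset.mem_filter, Finset.mem_Iic, Pi.le_def] at hI'
      rw [Finset.mem_range] at hj
      dsimp only at hI' hj ⊢
      rw [Finset.mem_filter, Finset.mem_Iic, Pi.le_def]
      refine ⟨fun l => ?_, fun l hl => ?_⟩
      · by_cases hl : l = i
        · subst hl; rw [Function.update_self]; omega
        · rw [Function.update_of_ne hl]; exact hI'.1 l
      · have hli : l ≠ i := fun h => hl (by rw [h]; exact List.mem_cons_self)
        rw [Function.update_of_ne hli]
        exact hI'.2 l fun hmem => hl (List.mem_cons_of_mem i hmem)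
    · intro I hI
      rw [Finset.mem_filter, Finset.mem_Iic, Pi.le_def] at hI
      rw [Finset.mem_product]
      dsimp only
      constructor
      · rw [hsL, Finset.mem_filter, Finset.mem_Iic, Pi.le_def]
        refine ⟨fun l => ?_, fun l hl => ?_⟩
        · by_cases hl : l = i
          · subst hl; rw [Function.update_self]; exact Nat.zero_le _
          · rw [Function.update_of_ne hl]; exact hI.1 l
        · by_cases hli : l = i
          · subst hli; rw [Function.update_self]
          · rw [Function.update_of_ne hli]
            refine hI.2 l fun hmem => ?_
            rcases List.mem_cons.mp hmem with h | h
            · exact hli h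
            · exact hl h
      · rw [Finset.mem_range]; exact Nat.lt_succ_of_le (hI.1 i)
    · rintro ⟨I', j⟩ hx
      rw [Finset.mem_product, hsL, Finset.mem_filter] at hx
      have hI'i : I' i = 0 := hx.1.2 i hiL
      dsimp only
      have h0 : Function.update I' i 0 = I' := by
        conv_lhs => rw [← hI'i]
        exact Function.update_eq_self i I'
      rw [Function.update_idem, Function.update_self, h0]
    · intro I hI
      dsimp only
      rw [Function.update_idem]
      exact Function.update_eq_self i I
    · rintro ⟨I', j⟩ hx
      rw [Finset.mem_product, hsL, Finset.mem_filter] at hx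
      dsimp only
      set K := Function.update I' i j with hK
      have hKi : K i = j := Function.update_self i j I'
      have hKl : ∀ l ∈ L, K l = I' l := fun l hl =>
        Function.update_of_ne (fun h : l = i => hiL (by rw [← h]; exact hl)) j I'
      have hmap : List.map (fun l => (R l).choose (K l)) L
          = List.map (fun l => (R l).choose (I' l)) L :=
        List.map_congr_left fun l hl => by rw [hKl l hl]
      have hfpart : opFold D (i :: L) K f = (D i)^[j] (opFold D L I' f) := by
        rw [opFold_cons, hKi, opFold_congr L f hKl]
      have hgpart : opFold D (i :: L) (R - K) g
          = (D i)^[R i - j] (opFold D L (R - I') g) := by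
        rw [opFold_cons]
        have h1 : (R - K) i = R i - j := by simp [hKi]
        have h2 : opFold D L (R - K) g = opFold D L (R - I') g :=
          opFold_congr (R := R - K) (R' := R - I') L g
            (fun l hl => by simp [hKl l hl])
        rw [h1, h2]
      rw [List.map_cons, List.prod_cons, hKi, hmap, hfpart, hgpart]
      push_cast
      ring

end secC

section secD
variable {n : ℕ}

lemma opFold_cmul {D : Fin n → Fn n → Fn n} (hD : ∀ i, IsWD (D i)) (L : List (Fin n))
    (R : Fin n → ℕ) (c : ℂ) (f : Fn n) (hf : ContDiff ℝ (⊤ : ℕ∞) f) :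
    opFold D L R (fun z => c * f z) = fun z => c * opFold D L R f z := by
  induction L with
  | nil => rfl
  | cons i L ih =>
    show (D i)^[R i] (opFold D L R fun z => c * f z) = _
    rw [ih, (hD i).iter_cmul _ _ _ (opFold_smooth hD _ _ _ hf)]
    rfl

lemma wIterZ_eq (R : Fin n → ℕ) (f : Fn n) : wIterZ R f = opFold wderivZ (List.finRange n) R f :=
  rfl
lemma wIterZbar_eq (S : Fin n → ℕ) (f : Fn n) :
    wIterZbar S f = opFold wderivZbar (List.finRange n) S f := rfl

lemma filter_finRange (R : Fin n → ℕ) :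
    (Finset.Iic R).filter (fun I => ∀ j, j ∉ List.finRange n → I j = 0) = Finset.Iic R :=
  Finset.filter_true_of_mem fun I _ j hj => absurd (List.mem_finRange j) hj

lemma coef_finRange (R I : Fin n → ℕ) :
    ((List.finRange n).map fun l => (R l).choose (I l)).prod = mChoose R I :=
  (Fin.prod_univ_def fun l => (R l).choose (I l)).symm

lemma wIterZ_smooth (R : Fin n → ℕ) (f : Fn n) (hf : ContDiff ℝ (⊤ : ℕ∞) f) :
    ContDiff ℝ (⊤ : ℕ∞) (wIterZ R f) := opFold_smooth isWD_wderivZ _ _ _ hf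
lemma wIterZbar_smooth (S : Fin n → ℕ) (f : Fn n) (hf : ContDiff ℝ (⊤ : ℕ∞) f) :
    ContDiff ℝ (⊤ : ℕ∞) (wIterZbar S f) := opFold_smooth isWD_wderivZbar _ _ _ hf

lemma iterZ_mul (R : Fin n → ℕ) (f g : Fn n) (hf : ContDiff ℝ (⊤ : ℕ∞) f) (hg : ContDiff ℝ (⊤ : ℕ∞) g) :
    wIterZ R (fun z => f z * g z) = fun z =>
      ∑ I ∈ Finset.Iic R, (mChoose R I : ℂ) * (wIterZ I f z * wIterZ (R - I) g z) := by
  rw [wIterZ_eq, opFold_mul isWD_wderivZ _ (List.nodup_finRange n) R f g hf hg]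
  funext z
  rw [filter_finRange]
  exact Finset.sum_congr rfl fun I _ => by rw [coef_finRange]; rfl
lemma iterZbar_mul (S : Fin n → ℕ) (f g : Fn n) (hf : ContDiff ℝ (⊤ : ℕ∞) f) (hg : ContDiff ℝ (⊤ : ℕ∞) g) :
    wIterZbar S (fun z => f z * g z) = fun z =>
      ∑ J ∈ Finset.Iic S, (mChoose S J : ℂ) * (wIterZbar J f z * wIterZbar (S - J) g z) := by
  rw [wIterZbar_eq, opFold_mul isWD_wderivZbar _ (List.nodup_finRange n) S f g hf hg]
  funext z
  rw [filter_finRange]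
  exact Finset.sum_congr rfl fun J _ => by rw [coef_finRange]; rfl

/-- full Leibniz rule for iterated Wirtinger derivatives -/
lemma wD_mul (R S : Fin n → ℕ) (f g : Fn n) (hf : ContDiff ℝ (⊤ : ℕ∞) f) (hg : ContDiff ℝ (⊤ : ℕ∞) g) :
    wD R S (fun z => f z * g z) = fun z =>
      ∑ J ∈ Finset.Iic S, ∑ I ∈ Finset.Iic R,
        ((mChoose R I : ℂ) * (mChoose S J : ℂ)) * (wD I J f z * wD (R - I) (S - J) g z) := by
  unfold wD
  rw [iterZbar_mul S f g hf hg, wIterZ_eq]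
  have hF : ∀ J ∈ Finset.Iic S, ContDiff ℝ (⊤ : ℕ∞)
      (fun z => (mChoose S J : ℂ) * (wIterZbar J f z * wIterZbar (S - J) g z)) := fun J _ =>
    contDiff_const.mul ((wIterZbar_smooth _ _ hf).mul (wIterZbar_smooth _ _ hg))
  rw [opFold_sum isWD_wderivZ _ _ _ _ hF]
  funext z
  refine Finset.sum_congr rfl fun J _ => ?_
  rw [show (fun z => (mChoose S J : ℂ) * (wIterZbar J f z * wIterZbar (S - J) g z))
      = (fun z => (mChoose S J : ℂ) * ((fun z => wIterZbar J f z * wIterZbar (S - J) g z) z))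
      from rfl,
    opFold_cmul isWD_wderivZ _ _ _ _ ((wIterZbar_smooth _ _ hf).mul (wIterZbar_smooth _ _ hg)),
    ← wIterZ_eq]
  rw [show (fun z => wIterZbar J f z * wIterZbar (S - J) g z)
      = (fun z => (wIterZbar J f) z * (wIterZbar (S - J) g) z) from rfl,
    iterZ_mul R _ _ (wIterZbar_smooth _ _ hf) (wIterZbar_smooth _ _ hg)]
  beta_reduce
  rw [Finset.mul_sum]
  exact Finset.sum_congr rfl fun I _ => by ring

/-- norm form of the Leibniz rule, in `ℝ≥0∞` -/
lemma wD_mul_nnorm (R S : Fin n → ℕ) (f g : Fn n) (hf : ContDiff ℝ (⊤ : ℕ∞) f) (hg : ContDiff ℝ (⊤ : ℕ∞) g)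
    (z : Fin n → ℂ) :
    (‖wD R S (fun z => f z * g z) z‖₊ : ℝ≥0∞) ≤
      ∑ I ∈ Finset.Iic R, ∑ J ∈ Finset.Iic S,
        ((mChoose R I * mChoose S J : ℕ) : ℝ≥0∞) *
          ((‖wD I J f z‖₊ : ℝ≥0∞) * (‖wD (R - I) (S - J) g z‖₊ : ℝ≥0∞)) := by
  have hnn : ‖wD R S (fun z => f z * g z) z‖₊ ≤
      ∑ J ∈ Finset.Iic S, ∑ I ∈ Finset.Iic R,
        ((mChoose R I * mChoose S J : ℕ) : ℝ≥0) * (‖wD I J f z‖₊ * ‖wD (R - I) (S - J) g z‖₊) := by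
    have hz : wD R S (fun z => f z * g z) z
        = ∑ J ∈ Finset.Iic S, ∑ I ∈ Finset.Iic R,
          ((mChoose R I : ℂ) * (mChoose S J : ℂ)) * (wD I J f z * wD (R - I) (S - J) g z) := by
      rw [wD_mul R S f g hf hg]
    rw [hz]
    refine le_trans (nnnorm_sum_le _ _) ?_
    refine le_trans (Finset.sum_le_sum fun J _ => nnnorm_sum_le _ _) ?_
    refine Finset.sum_le_sum fun J _ => Finset.sum_le_sum fun I _ => le_of_eq ?_
    rw [nnnorm_mul, nnnorm_mul, nnnorm_mul, Complex.nnnorm_natCast, Complex.nnnorm_natCast]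
    push_cast
    ring
  calc (‖wD R S (fun z => f z * g z) z‖₊ : ℝ≥0∞)
      ≤ ((∑ J ∈ Finset.Iic S, ∑ I ∈ Finset.Iic R,
          ((mChoose R I * mChoose S J : ℕ) : ℝ≥0) *
            (‖wD I J f z‖₊ * ‖wD (R - I) (S - J) g z‖₊) : ℝ≥0) : ℝ≥0∞) :=
        ENNReal.coe_le_coe.mpr hnn
    _ = _ := by
        push_cast
        rw [Finset.sum_comm]
end secD

section secF
variable {n : ℕ}

lemma mAbs_zero : mAbs (0 : Fin n → ℕ) = 0 := by simp [mAbs]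
lemma mFact_zero : mFact (0 : Fin n → ℕ) = 1 := by simp [mFact]
lemma mAbs_add (N S : Fin n → ℕ) : mAbs (N + S) = mAbs N + mAbs S := by
  simp [mAbs, Finset.sum_add_distrib]
lemma mAbs_sub_add {I R : Fin n → ℕ} (h : I ≤ R) : mAbs I + mAbs (R - I) = mAbs R := by
  rw [mAbs, mAbs, mAbs, ← Finset.sum_add_distrib]
  exact Finset.sum_congr rfl fun i _ => by simp only [Pi.sub_apply]; exact Nat.add_sub_cancel' (h i)
lemma mChoose_symm {I R : Fin n → ℕ} (h : I ≤ R) : mChoose R (R - I) = mChoose R I :=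
  Finset.prod_congr rfl fun i _ => by rw [Pi.sub_apply, Nat.choose_symm (h i)]
lemma pi_sub_sub {I R : Fin n → ℕ} (h : I ≤ R) : R - (R - I) = I :=
  funext fun i => by simp only [Pi.sub_apply]; exact Nat.sub_sub_self (h i)
lemma pi_sub_le (R I : Fin n → ℕ) : R - I ≤ R := fun i => by simp [Pi.sub_apply]

/-- the `N = 0` term bound for `h0` -/
lemma h0_ge (p : Fin n → ℂ) {ℏ : ℝ} (hℏ : 0 < ℏ) (I J : Fin n → ℕ) (f : Fn n) :
    (ENNReal.ofReal (2*ℏ)) ^ (mAbs I + mAbs J) * ((‖wD I J f p‖₊ : ℝ≥0∞))^2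
      ≤ h0 p ℏ I J f := by
  have h := ENNReal.le_tsum (f := fun N : Fin n → ℕ =>
    ENNReal.ofReal ((2*ℏ)^(mAbs I + mAbs J + mAbs N)) / (mFact N : ℝ≥0∞) *
      (‖wD I (N + J) f p‖₊ : ℝ≥0∞)^2) 0
  refine le_trans (le_of_eq ?_) h
  rw [mAbs_zero, mFact_zero, zero_add, Nat.add_zero]
  rw [ENNReal.ofReal_pow (by linarith)]
  simp

/-- reindexing `I ↦ R - I`, `J ↦ M - J` on the product of `Iic`s -/
lemma sum_reindex (R M : Fin n → ℕ) (F : (Fin n → ℕ) → (Fin n → ℕ) → ℝ≥0∞) :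
    ∑ q ∈ Finset.Iic R ×ˢ Finset.Iic M,
        ((mChoose R q.1 * mChoose M q.2 : ℕ) : ℝ≥0∞) * F (R - q.1) (M - q.2)
      = ∑ q ∈ Finset.Iic R ×ˢ Finset.Iic M,
        ((mChoose R q.1 * mChoose M q.2 : ℕ) : ℝ≥0∞) * F q.1 q.2 := by
  refine Finset.sum_nbij' (i := fun q => (R - q.1, M - q.2))
    (j := fun q => (R - q.1, M - q.2)) ?_ ?_ ?_ ?_ ?_
  · rintro ⟨I, J⟩ _
    rw [Finset.mem_product]
    exact ⟨Finset.mem_Iic.mpr (pi_sub_le R I), Finset.mem_Iic.mpr (pi_sub_le M J)⟩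
  · rintro ⟨I, J⟩ _
    rw [Finset.mem_product]
    exact ⟨Finset.mem_Iic.mpr (pi_sub_le R I), Finset.mem_Iic.mpr (pi_sub_le M J)⟩
  · rintro ⟨I, J⟩ hq
    rw [Finset.mem_product, Finset.mem_Iic, Finset.mem_Iic] at hq
    dsimp only
    rw [pi_sub_sub hq.1, pi_sub_sub hq.2]
  · rintro ⟨I, J⟩ hq
    rw [Finset.mem_product, Finset.mem_Iic, Finset.mem_Iic] at hq
    dsimp only
    rw [pi_sub_sub hq.1, pi_sub_sub hq.2]
  · rintro ⟨I, J⟩ hq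
    rw [Finset.mem_product, Finset.mem_Iic, Finset.mem_Iic] at hq
    dsimp only at hq ⊢
    rw [mChoose_symm hq.1, mChoose_symm hq.2]

lemma hSem_zero (p : Fin n → ℂ) (ℏ : ℝ) (ℓ : ℕ) (R S : Fin n → ℕ) (f : Fn n) :
    hSem p ℏ 0 ℓ R S f = h0 p ℏ R S f := rfl

lemma hSem_succ_even (p : Fin n → ℂ) (ℏ : ℝ) (m ℓ : ℕ) (hm : ℓ % 2 = 0) (R S : Fin n → ℕ)
    (f : Fn n) : hSem p ℏ (m+1) ℓ R S f =
      ∑' N : Fin n → ℕ, (mFact N : ℝ≥0∞)⁻¹ *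
        (∑ I ∈ Finset.Iic R, ∑ J ∈ Finset.Iic (N + S),
          ((mChoose R I * mChoose (N + S) J : ℕ) : ℝ≥0∞) * hSem p ℏ m (ℓ / 2) I J f) ^ 2 := by
  rw [hSem, if_pos hm]

lemma hSem_succ_odd (p : Fin n → ℂ) (ℏ : ℝ) (m ℓ : ℕ) (hm : ¬ (ℓ % 2 = 0)) (R S : Fin n → ℕ)
    (f : Fn n) : hSem p ℏ (m+1) ℓ R S f =
      ∑' N : Fin n → ℕ, (mFact N : ℝ≥0∞)⁻¹ *
        (∑ I ∈ Finset.Iic R, ∑ J ∈ Finset.Iic (N + S),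
          ((mChoose R I * mChoose (N + S) J : ℕ) : ℝ≥0∞) * hSem p ℏ m ((ℓ - 1) / 2) J I f) ^ 2 := by
  rw [hSem, if_neg hm]

/-- Cauchy–Schwarz for the recursion shape, with the double sums -/
lemma step_cs (R S : Fin n → ℕ) (φ x y : (Fin n → ℕ) → (Fin n → ℕ) → ℝ≥0∞)
    (h : ∀ I J, φ I J ≤ (x I J * y I J) ^ (1/2:ℝ)) :
    (∑' N : Fin n → ℕ, (mFact N : ℝ≥0∞)⁻¹ *
        (∑ I ∈ Finset.Iic R, ∑ J ∈ Finset.Iic (N + S),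
          ((mChoose R I * mChoose (N + S) J : ℕ) : ℝ≥0∞) * φ I J) ^ 2)
      ≤ ((∑' N : Fin n → ℕ, (mFact N : ℝ≥0∞)⁻¹ *
          (∑ I ∈ Finset.Iic R, ∑ J ∈ Finset.Iic (N + S),
            ((mChoose R I * mChoose (N + S) J : ℕ) : ℝ≥0∞) * x I J) ^ 2) *
         (∑' N : Fin n → ℕ, (mFact N : ℝ≥0∞)⁻¹ *
          (∑ I ∈ Finset.Iic R, ∑ J ∈ Finset.Iic (N + S),
            ((mChoose R I * mChoose (N + S) J : ℕ) : ℝ≥0∞) * y I J) ^ 2)) ^ (1/2:ℝ) := by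
  have hrw : ∀ (ψ : (Fin n → ℕ) → (Fin n → ℕ) → ℝ≥0∞) (N : Fin n → ℕ),
      (∑ I ∈ Finset.Iic R, ∑ J ∈ Finset.Iic (N + S),
        ((mChoose R I * mChoose (N + S) J : ℕ) : ℝ≥0∞) * ψ I J)
      = ∑ q ∈ Finset.Iic R ×ˢ Finset.Iic (N + S),
        ((mChoose R q.1 * mChoose (N + S) q.2 : ℕ) : ℝ≥0∞) * ψ q.1 q.2 := fun ψ N => by
    rw [Finset.sum_product]
  simp only [hrw]
  exact main_cs (w := fun N => (mFact N : ℝ≥0∞)⁻¹)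
    (t := fun N => Finset.Iic R ×ˢ Finset.Iic (N + S))
    (c := fun N q => ((mChoose R q.1 * mChoose (N + S) q.2 : ℕ) : ℝ≥0∞))
    (φ := fun N q => φ q.1 q.2) (x := fun N q => x q.1 q.2) (y := fun N q => y q.1 q.2)
    (fun N q _ => h q.1 q.2)

/-- the base case `m = 0`, `ℓ = 0` -/
lemma base_case (p : Fin n → ℂ) {ℏ : ℝ} (hℏ : 0 < ℏ) (f g : Fn n)
    (hf : ContDiff ℝ (⊤ : ℕ∞) f) (hg : ContDiff ℝ (⊤ : ℕ∞) g) (R S : Fin n → ℕ) :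
    hSem p ℏ 0 0 R S (fun z => f z * g z) ≤
      (hSem p ℏ 1 0 R S f * hSem p ℏ 1 0 R S g) ^ (1/2:ℝ) := by
  classical
  set T := ENNReal.ofReal (2*ℏ) with hT
  set a : (Fin n → ℕ) → (Fin n → ℕ) → ℝ≥0∞ := fun I J => (‖wD I J f p‖₊ : ℝ≥0∞) with ha
  set b : (Fin n → ℕ) → (Fin n → ℕ) → ℝ≥0∞ := fun I J => (‖wD I J g p‖₊ : ℝ≥0∞) with hb
  set xf : (Fin n → ℕ) → (Fin n → ℕ) × (Fin n → ℕ) → ℝ≥0∞ :=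
    fun N q => T ^ (mAbs q.1 + mAbs q.2) * (a q.1 q.2)^2 with hxf
  set yf : (Fin n → ℕ) → (Fin n → ℕ) × (Fin n → ℕ) → ℝ≥0∞ :=
    fun N q => T ^ (mAbs (R - q.1) + mAbs (N + S - q.2)) * (b (R - q.1) (N + S - q.2))^2 with hyf
  have key := main_cs (w := fun N : Fin n → ℕ => (mFact N : ℝ≥0∞)⁻¹)
    (t := fun N => Finset.Iic R ×ˢ Finset.Iic (N + S))
    (c := fun N q => ((mChoose R q.1 * mChoose (N + S) q.2 : ℕ) : ℝ≥0∞))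
    (φ := fun N q => (xf N q * yf N q) ^ (1/2:ℝ)) (x := xf) (y := yf)
    (fun N q _ => le_rfl)
  refine le_trans (le_trans ?_ key) ?_
  · -- LHS: h0 of the product is below the φ-expression
    rw [hSem_zero]
    refine ENNReal.tsum_le_tsum fun N => ?_
    have hsum : ∀ q ∈ Finset.Iic R ×ˢ Finset.Iic (N + S),
        ((mChoose R q.1 * mChoose (N + S) q.2 : ℕ) : ℝ≥0∞) * ((xf N q * yf N q) ^ (1/2:ℝ))
        = (T ^ (mAbs R + mAbs S + mAbs N)) ^ (1/2:ℝ) *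
          (((mChoose R q.1 * mChoose (N + S) q.2 : ℕ) : ℝ≥0∞) *
            (a q.1 q.2 * b (R - q.1) (N + S - q.2))) := by
      rintro ⟨I, J⟩ hq
      rw [Finset.mem_product, Finset.mem_Iic, Finset.mem_Iic] at hq
      dsimp only at hq ⊢
      have hexp : (mAbs I + mAbs J) + (mAbs (R - I) + mAbs (N + S - J))
          = mAbs R + mAbs S + mAbs N := by
        have h1 := mAbs_sub_add hq.1
        have h2 := mAbs_sub_add hq.2
        have h3 := mAbs_add N S
        omega
      rw [show (T ^ (mAbs I + mAbs J) * (a I J)^2) *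
          (T ^ (mAbs (R - I) + mAbs (N + S - J)) * (b (R - I) (N + S - J))^2)
          = T ^ (mAbs R + mAbs S + mAbs N) * (a I J * b (R - I) (N + S - J))^2 from by
            rw [← hexp, pow_add]; ring]
      rw [mul_rpow_half, sq_rpow_half]
      ring
    rw [Finset.sum_congr rfl hsum, ← Finset.mul_sum]
    have hnorm : (‖wD R (N + S) (fun z => f z * g z) p‖₊ : ℝ≥0∞) ≤
        ∑ q ∈ Finset.Iic R ×ˢ Finset.Iic (N + S),
          ((mChoose R q.1 * mChoose (N + S) q.2 : ℕ) : ℝ≥0∞) *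
            (a q.1 q.2 * b (R - q.1) (N + S - q.2)) := by
      rw [Finset.sum_product]
      exact wD_mul_nnorm R (N + S) f g hf hg p
    calc ENNReal.ofReal ((2*ℏ)^(mAbs R + mAbs S + mAbs N)) / (mFact N : ℝ≥0∞) *
          (‖wD R (N + S) (fun z => f z * g z) p‖₊ : ℝ≥0∞)^2
        ≤ T ^ (mAbs R + mAbs S + mAbs N) / (mFact N : ℝ≥0∞) *
          (∑ q ∈ Finset.Iic R ×ˢ Finset.Iic (N + S),
            ((mChoose R q.1 * mChoose (N + S) q.2 : ℕ) : ℝ≥0∞) *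
              (a q.1 q.2 * b (R - q.1) (N + S - q.2)))^2 := by
          rw [hT, ← ENNReal.ofReal_pow (by linarith)]
          exact mul_le_mul_right (pow_le_pow_left' hnorm 2) _
      _ = (mFact N : ℝ≥0∞)⁻¹ *
          ((T ^ (mAbs R + mAbs S + mAbs N)) ^ (1/2:ℝ) *
            ∑ q ∈ Finset.Iic R ×ˢ Finset.Iic (N + S),
              ((mChoose R q.1 * mChoose (N + S) q.2 : ℕ) : ℝ≥0∞) *
                (a q.1 q.2 * b (R - q.1) (N + S - q.2)))^2 := by
          rw [mul_pow, rpow_half_sq, ENNReal.div_eq_inv_mul]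
          ring
  · -- RHS: x/y-expressions are below hSem 1 0
    refine ENNReal.rpow_le_rpow ?_ (by norm_num)
    refine mul_le_mul' ?_ ?_
    · rw [hSem_succ_even p ℏ 0 0 rfl]
      refine ENNReal.tsum_le_tsum fun N => ?_
      refine mul_le_mul_right (pow_le_pow_left' ?_ 2) _
      rw [show (∑ I ∈ Finset.Iic R, ∑ J ∈ Finset.Iic (N + S),
          ((mChoose R I * mChoose (N + S) J : ℕ) : ℝ≥0∞) * hSem p ℏ 0 0 I J f)
          = ∑ q ∈ Finset.Iic R ×ˢ Finset.Iic (N + S),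
            ((mChoose R q.1 * mChoose (N + S) q.2 : ℕ) : ℝ≥0∞) * hSem p ℏ 0 0 q.1 q.2 f from
        by rw [Finset.sum_product]]
      refine Finset.sum_le_sum fun q _ => mul_le_mul_right ?_ _
      rw [hSem_zero]
      exact h0_ge p hℏ q.1 q.2 f
    · rw [hSem_succ_even p ℏ 0 0 rfl]
      refine ENNReal.tsum_le_tsum fun N => ?_
      refine mul_le_mul_right (pow_le_pow_left' ?_ 2) _
      rw [show (∑ I ∈ Finset.Iic R, ∑ J ∈ Finset.Iic (N + S),
          ((mChoose R I * mChoose (N + S) J : ℕ) : ℝ≥0∞) * hSem p ℏ 0 0 I J g)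
          = ∑ q ∈ Finset.Iic R ×ˢ Finset.Iic (N + S),
            ((mChoose R q.1 * mChoose (N + S) q.2 : ℕ) : ℝ≥0∞) * hSem p ℏ 0 0 q.1 q.2 g from
        by rw [Finset.sum_product]]
      rw [show (∑ q ∈ Finset.Iic R ×ˢ Finset.Iic (N + S),
          ((mChoose R q.1 * mChoose (N + S) q.2 : ℕ) : ℝ≥0∞) * yf N q)
          = ∑ q ∈ Finset.Iic R ×ˢ Finset.Iic (N + S),
            ((mChoose R q.1 * mChoose (N + S) q.2 : ℕ) : ℝ≥0∞) *
              (T ^ (mAbs q.1 + mAbs q.2) * (b q.1 q.2)^2) from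
        sum_reindex R (N + S) (fun I J => T ^ (mAbs I + mAbs J) * (b I J)^2)]
      refine Finset.sum_le_sum fun q _ => mul_le_mul_right ?_ _
      rw [hSem_zero]
      exact h0_ge p hℏ q.1 q.2 g

/-- the main inequality on `hSem` -/
lemma hSem_main (p : Fin n → ℂ) {ℏ : ℝ} (hℏ : 0 < ℏ) (f g : Fn n)
    (hf : ContDiff ℝ (⊤ : ℕ∞) f) (hg : ContDiff ℝ (⊤ : ℕ∞) g) :
    ∀ (m ℓ : ℕ), ℓ < 2^m → ∀ (R S : Fin n → ℕ),
      hSem p ℏ m ℓ R S (fun z => f z * g z) ≤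
        (hSem p ℏ (m+1) ℓ R S f * hSem p ℏ (m+1) ℓ R S g) ^ (1/2:ℝ) := by
  intro m
  induction m with
  | zero =>
    intro ℓ hℓ R S
    interval_cases ℓ
    exact base_case p hℏ f g hf hg R S
  | succ m ih =>
    intro ℓ hℓ R S
    by_cases hpar : ℓ % 2 = 0
    · have hdiv : ℓ / 2 < 2^m := by
        rw [Nat.div_lt_iff_lt_mul (by norm_num)]
        calc ℓ < 2^(m+1) := hℓ
          _ = 2^m * 2 := by rw [pow_succ]
      rw [hSem_succ_even p ℏ m ℓ hpar, hSem_succ_even p ℏ (m+1) ℓ hpar,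
        hSem_succ_even p ℏ (m+1) ℓ hpar]
      exact step_cs R S _ _ _ fun I J => ih (ℓ/2) hdiv I J
    · have hdiv : (ℓ - 1) / 2 < 2^m := by
        rw [Nat.div_lt_iff_lt_mul (by norm_num)]
        calc ℓ - 1 < 2^(m+1) := lt_of_le_of_lt (Nat.sub_le ℓ 1) hℓ
          _ = 2^m * 2 := by rw [pow_succ]
      rw [hSem_succ_odd p ℏ m ℓ hpar, hSem_succ_odd p ℏ (m+1) ℓ hpar,
        hSem_succ_odd p ℏ (m+1) ℓ hpar]
      exact step_cs R S _ _ _ fun I J => ih ((ℓ-1)/2) hdiv J I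

/-- the seminorm inequality -/
lemma wNorm_main (p : Fin n → ℂ) {ℏ : ℝ} (hℏ : 0 < ℏ) (f g : Fn n)
    (hf : ContDiff ℝ (⊤ : ℕ∞) f) (hg : ContDiff ℝ (⊤ : ℕ∞) g) (m ℓ : ℕ) (R S : Fin n → ℕ)
    (hℓ : ℓ < 2^m) :
    wNorm p ℏ m ℓ R S (fun z => f z * g z) ≤
      wNorm p ℏ (m+1) ℓ R S f * wNorm p ℏ (m+1) ℓ R S g := by
  unfold wNorm
  have h := hSem_main p hℏ f g hf hg m ℓ hℓ R S
  calc hSem p ℏ m ℓ R S (fun z => f z * g z) ^ (((2:ℝ)^(m+1))⁻¹)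
      ≤ ((hSem p ℏ (m+1) ℓ R S f * hSem p ℏ (m+1) ℓ R S g) ^ (1/2:ℝ)) ^ (((2:ℝ)^(m+1))⁻¹) :=
        ENNReal.rpow_le_rpow h (by positivity)
    _ = (hSem p ℏ (m+1) ℓ R S f * hSem p ℏ (m+1) ℓ R S g) ^ (((2:ℝ)^(m+1+1))⁻¹) := by
        rw [← ENNReal.rpow_mul]
        congr 1
        have : (0:ℝ) < 2^(m+1) := by positivity
        field_simp
        ring
    _ = _ := ENNReal.mul_rpow_of_nonneg _ _ (by positivity)

end secF

/-- continuity of the pointwise product. -/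
theorem pointwise_product_continuous {n : ℕ} (hn : 1 ≤ n)
    (p : Fin n → ℂ) (ℏ : ℝ) (hℏ : 0 < ℏ)
    (f g : Fn n) (hf : ContDiff ℝ (⊤ : ℕ∞) f) (hg : ContDiff ℝ (⊤ : ℕ∞) g) :
    (∀ (m ℓ : ℕ) (R S : Fin n → ℕ), ℓ < 2^m →
      wNorm p ℏ m ℓ R S (fun z => f z * g z) ≤
        wNorm p ℏ (m+1) ℓ R S f * wNorm p ℏ (m+1) ℓ R S g) ∧
    (f ∈ tA p ℏ → g ∈ tA p ℏ → (fun z => f z * g z) ∈ tA p ℏ) := by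
  constructor
  · intro m ℓ R S hℓ
    exact wNorm_main p hℏ f g hf hg m ℓ R S hℓ
  · intro hfA hgA
    refine ⟨hf.mul hg, fun m ℓ R S hℓ => ?_⟩
    have h1 := wNorm_main p hℏ f g hf hg m ℓ R S hℓ
    have hlt : ℓ < 2^(m+1) := hℓ.trans (Nat.pow_lt_pow_succ one_lt_two)
    have h2 := hfA.2 (m+1) ℓ R S hlt
    have h3 := hgA.2 (m+1) ℓ R S hlt
    exact lt_of_le_of_lt h1 (ENNReal.mul_lt_top h2 h3)

end WickPaper
end
end

section
/- Let n = 1 and let f be the entire function f(z) = Σ_{r=0}^∞ z^r/(r!)^{1/4} on ℂ. Then for every ℏ > 0 one has ‖f‖^{0,ℏ}_{1,1,0,0} = ∞; in particular f ∉ Ã_{0,ℏ}, although the identity function z ↦ z does belong to Ã_{0,ℏ}. -/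
open scoped ENNReal NNReal BigOperators
open Complex

noncomputable section

namespace WickPaper

/-! ### Auxiliary lemmas -/

section Aux

/-- reductions for `n = 1` -/
lemma mAbs_one (N : Fin 1 → ℕ) : mAbs N = N 0 := by simp [mAbs]
lemma mFact_one (N : Fin 1 → ℕ) : mFact N = (N 0).factorial := by simp [mFact]
lemma mChoose_one (R I : Fin 1 → ℕ) : mChoose R I = (R 0).choose (I 0) := by simp [mChoose]
lemma wD_one (R S : Fin 1 → ℕ) (f : Fn 1) :
    wD R S f = (wderivZ 0)^[R 0] ((wderivZbar 0)^[S 0] f) := rfl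

def π1 : (Fin 1 → ℂ) →L[ℝ] ℂ :=
  ((ContinuousLinearMap.proj 0 : (Fin 1 → ℂ) →L[ℂ] ℂ)).restrictScalars ℝ

lemma fderiv_comp_pi (G : ℂ → ℂ) (hG : Differentiable ℂ G) (z : Fin 1 → ℂ) (v : Fin 1 → ℂ) :
    fderiv ℝ (fun z : Fin 1 → ℂ => G (z 0)) z v = v 0 * deriv G (z 0) := by
  have h1 : HasFDerivAt G (((1 : ℂ →L[ℂ] ℂ).smulRight (deriv G (z 0))).restrictScalars ℝ) (z 0) :=
    ((hG (z 0)).hasDerivAt.hasFDerivAt).restrictScalars ℝ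
  have h2 : HasFDerivAt (fun z : Fin 1 → ℂ => G (z 0))
      ((((1 : ℂ →L[ℂ] ℂ).smulRight (deriv G (z 0))).restrictScalars ℝ).comp π1) z :=
    h1.comp z (π1.hasFDerivAt (x := z))
  rw [h2.fderiv]
  simp [π1]

lemma wderivZ_comp (G : ℂ → ℂ) (hG : Differentiable ℂ G) :
    wderivZ 0 (fun z : Fin 1 → ℂ => G (z 0)) = fun z => deriv G (z 0) := by
  funext z
  simp only [wderivZ, fderiv_comp_pi G hG, Pi.single_eq_same]
  ring_nf
  rw [Complex.I_sq]
  ring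

lemma wderivZbar_comp (G : ℂ → ℂ) (hG : Differentiable ℂ G) :
    wderivZbar 0 (fun z : Fin 1 → ℂ => G (z 0)) = fun _ => 0 := by
  funext z
  simp only [wderivZbar, fderiv_comp_pi G hG, Pi.single_eq_same]
  ring_nf
  rw [Complex.I_sq]
  ring

lemma deriv_entire {G : ℂ → ℂ} (hG : Differentiable ℂ G) : Differentiable ℂ (deriv G) :=
  analyticOnNhd_univ_iff_differentiable.mp
    ((analyticOnNhd_univ_iff_differentiable.mpr hG).deriv)

lemma iteratedDeriv_entire {G : ℂ → ℂ} (hG : Differentiable ℂ G) (k : ℕ) :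
    Differentiable ℂ (iteratedDeriv k G) := by
  induction k with
  | zero => simpa using hG
  | succ k ih => rw [iteratedDeriv_succ]; exact deriv_entire ih

lemma iter_wderivZ_comp (G : ℂ → ℂ) (hG : Differentiable ℂ G) (k : ℕ) :
    (wderivZ 0)^[k] (fun z : Fin 1 → ℂ => G (z 0)) = fun z => iteratedDeriv k G (z 0) := by
  induction k with
  | zero => simp
  | succ k ih =>
    rw [Function.iterate_succ_apply', ih, wderivZ_comp _ (iteratedDeriv_entire hG k),
      ← iteratedDeriv_succ]

lemma wderivZ_zero_fn : wderivZ 0 (fun _ : Fin 1 → ℂ => (0:ℂ)) = fun _ => 0 := by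
  have := wderivZ_comp (fun _ => (0:ℂ)) (differentiable_const 0)
  simpa using this

lemma wderivZbar_zero_fn : wderivZbar 0 (fun _ : Fin 1 → ℂ => (0:ℂ)) = fun _ => 0 :=
  wderivZbar_comp (fun _ => (0:ℂ)) (differentiable_const 0)

lemma iter_wderivZ_zero_fn (k : ℕ) :
    (wderivZ 0)^[k] (fun _ : Fin 1 → ℂ => (0:ℂ)) = fun _ => 0 := by
  induction k with
  | zero => simp
  | succ k ih => rw [Function.iterate_succ_apply', ih, wderivZ_zero_fn]

lemma iter_wderivZbar_zero_fn (k : ℕ) :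
    (wderivZbar 0)^[k] (fun _ : Fin 1 → ℂ => (0:ℂ)) = fun _ => 0 := by
  induction k with
  | zero => simp
  | succ k ih => rw [Function.iterate_succ_apply', ih, wderivZbar_zero_fn]

lemma iter_wderivZbar_comp (G : ℂ → ℂ) (hG : Differentiable ℂ G) (k : ℕ) (hk : k ≠ 0) :
    (wderivZbar 0)^[k] (fun z : Fin 1 → ℂ => G (z 0)) = fun _ => 0 := by
  obtain ⟨j, rfl⟩ := Nat.exists_eq_succ_of_ne_zero hk
  rw [Function.iterate_succ_apply, wderivZbar_comp _ hG, iter_wderivZbar_zero_fn]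

/-- value of `wD` on a composite of an entire function with the coordinate -/
lemma wD_comp_S_pos (G : ℂ → ℂ) (hG : Differentiable ℂ G) (R S : Fin 1 → ℕ) (hS : S 0 ≠ 0) :
    wD R S (fun z : Fin 1 → ℂ => G (z 0)) = fun _ => 0 := by
  rw [wD_one, iter_wderivZbar_comp G hG _ hS, iter_wderivZ_zero_fn]

lemma wD_comp_S_zero (G : ℂ → ℂ) (hG : Differentiable ℂ G) (R S : Fin 1 → ℕ) (hS : S 0 = 0) :
    wD R S (fun z : Fin 1 → ℂ => G (z 0)) = fun z => iteratedDeriv (R 0) G (z 0) := by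
  rw [wD_one, hS]
  simpa using iter_wderivZ_comp G hG (R 0)

/-! ### the entire function -/

def cF (r : ℕ) : ℂ := ((((r.factorial : ℝ) ^ ((1:ℝ)/4) : ℝ) : ℂ))⁻¹

def Fent : ℂ → ℂ := fun w => ∑' r : ℕ, w^r / ((((r.factorial : ℝ) ^ ((1:ℝ)/4) : ℝ) : ℂ))

lemma fact_rpow_pos (r : ℕ) : 0 < (r.factorial : ℝ) ^ ((1:ℝ)/4) :=
  Real.rpow_pos_of_pos (by exact_mod_cast r.factorial_pos) _

lemma cF_ne_zero (r : ℕ) : cF r ≠ 0 := by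
  simp only [cF, ne_eq, inv_eq_zero]
  exact_mod_cast (fact_rpow_pos r).ne'

lemma norm_cF (r : ℕ) : ‖cF r‖ = ((r.factorial : ℝ) ^ ((1:ℝ)/4))⁻¹ := by
  rw [cF, norm_inv, Complex.norm_real, Real.norm_eq_abs, abs_of_pos (fact_rpow_pos r)]

lemma ratio_tendsto :
    Filter.Tendsto (fun n : ℕ => ‖cF (n+1)‖ / ‖cF n‖) Filter.atTop (nhds 0) := by
  have hval : ∀ n : ℕ, ‖cF (n+1)‖ / ‖cF n‖ = (((n:ℝ)+1)⁻¹) ^ ((1:ℝ)/4) := by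
    intro n
    have e1 : (((n:ℝ)+1)⁻¹) ^ ((1:ℝ)/4)
        = ((n.factorial : ℝ) / ((n+1).factorial : ℝ)) ^ ((1:ℝ)/4) := by
      congr 1
      rw [Nat.factorial_succ]
      have hf : (0:ℝ) < (n.factorial : ℝ) := by exact_mod_cast n.factorial_pos
      push_cast
      field_simp
    rw [norm_cF, norm_cF, e1, Real.div_rpow (by positivity) (by positivity),
      div_eq_mul_inv, inv_inv, mul_comm]
    ring
  simp_rw [hval]
  have h1 : Filter.Tendsto (fun n : ℕ => ((n:ℝ)+1)⁻¹) Filter.atTop (nhds 0) :=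
    tendsto_one_div_add_atTop_nhds_zero_nat.congr (by intro n; rw [one_div])
  have h2 : ContinuousAt (fun x : ℝ => x ^ ((1:ℝ)/4)) 0 :=
    Real.continuousAt_rpow_const 0 _ (Or.inr (by norm_num))
  have := h2.tendsto.comp h1
  simpa [Function.comp_def, Real.zero_rpow (by norm_num : (1:ℝ)/4 ≠ 0)] using this

def pF : FormalMultilinearSeries ℂ ℂ ℂ := FormalMultilinearSeries.ofScalars ℂ cF

lemma pF_radius : pF.radius = ⊤ :=
  FormalMultilinearSeries.ofScalars_radius_eq_top_of_tendsto ℂ cF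
    (Filter.Eventually.of_forall cF_ne_zero) ratio_tendsto

lemma hasFPS : HasFPowerSeriesOnBall Fent pF 0 ⊤ := by
  have h := pF.hasFPowerSeriesOnBall (by rw [pF_radius]; exact ENNReal.zero_lt_top)
  rw [pF_radius] at h
  have he : Fent = pF.sum := by
    funext w
    rw [Fent, FormalMultilinearSeries.sum]
    apply tsum_congr
    intro r
    rw [pF, FormalMultilinearSeries.ofScalars_apply_eq, cF, smul_eq_mul]
    ring
  rw [he]
  exact h

lemma Fent_diff : Differentiable ℂ Fent := by
  intro w
  have := (hasFPS.analyticAt_of_mem (y := w) (by simp)).differentiableAt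
  simpa using this

lemma iteratedDeriv_Fent (k : ℕ) :
    iteratedDeriv k Fent 0 = (k.factorial : ℂ) * cF k := by
  have h := hasFPS.factorial_smul (1 : ℂ) k
  rw [iteratedDeriv_eq_iteratedFDeriv, ← h, pF, FormalMultilinearSeries.ofScalars_apply_eq]
  simp [mul_comm]

lemma norm_iteratedDeriv_Fent (k : ℕ) :
    ‖iteratedDeriv k Fent 0‖ = (k.factorial : ℝ) * ((k.factorial : ℝ) ^ ((1:ℝ)/4))⁻¹ := by
  rw [iteratedDeriv_Fent, norm_mul, norm_cF]
  simp

/-! ### tsum reindexing and divergence -/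

lemma tsum_pi (H : (Fin 1 → ℕ) → ℝ≥0∞) : ∑' N : Fin 1 → ℕ, H N = ∑' k : ℕ, H (fun _ => k) :=
  ((Equiv.funUnique (Fin 1) ℕ).symm.tsum_eq H).symm

lemma tsum_top (ℏ : ℝ) (hℏ : 0 < ℏ) :
    ∑' k : ℕ, ENNReal.ofReal (((2*ℏ)^k * (k.factorial : ℝ))^2) = ⊤ := by
  have h2 : (0:ℝ) < 2*ℏ := by linarith
  have htend := FloorSemiring.tendsto_pow_div_factorial_atTop ((2*ℏ)⁻¹)
  have hev : ∀ᶠ k in Filter.atTop, ((2*ℏ)⁻¹)^k / (k.factorial : ℝ) < 1 :=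
    htend.eventually_lt_const one_pos
  obtain ⟨K, hK⟩ := Filter.eventually_atTop.mp hev
  have hone : ∀ k, K ≤ k → (1:ℝ≥0∞) ≤ ENNReal.ofReal (((2*ℏ)^k * (k.factorial : ℝ))^2) := by
    intro k hk
    have h := hK k hk
    have hfac : (0:ℝ) < (k.factorial : ℝ) := by exact_mod_cast k.factorial_pos
    have hp : (0:ℝ) < (2*ℏ)^k := pow_pos h2 k
    rw [div_lt_one hfac, inv_pow, inv_lt_iff_one_lt_mul₀ hp] at h
    rw [ENNReal.one_le_ofReal]
    nlinarith
  rw [eq_top_iff]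
  calc (⊤:ℝ≥0∞) = ∑' _ : ℕ, (1:ℝ≥0∞) :=
        (ENNReal.tsum_const_eq_top_of_ne_zero one_ne_zero).symm
    _ ≤ _ := by
        refine Summable.tsum_le_tsum_of_inj (fun k => k + K) (add_left_injective K)
          (fun c _ => zero_le) (fun k => hone (k + K) (Nat.le_add_left K k))
          ENNReal.summable ENNReal.summable

end Aux

/-! ### the identity function -/

def gId : Fn 1 := fun z => z 0

lemma iteratedDeriv_const_succ (c : ℂ) : ∀ k : ℕ,
    iteratedDeriv (k+1) (fun _ : ℂ => c) = fun _ => 0 := by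
  intro k
  induction k generalizing c with
  | zero => funext w; rw [iteratedDeriv_one]; simp
  | succ k ih =>
    rw [iteratedDeriv_succ']
    have : deriv (fun _ : ℂ => c) = fun _ : ℂ => (0:ℂ) := by funext w; simp
    rw [this, ih]

lemma norm_iter_id_le (k : ℕ) : ‖iteratedDeriv k (fun w : ℂ => w) 0‖ ≤ 1 := by
  match k with
  | 0 => simp
  | 1 => rw [iteratedDeriv_one]; simp
  | (k+2) =>
    rw [iteratedDeriv_succ']
    have : deriv (fun w : ℂ => w) = fun _ : ℂ => (1:ℂ) := by funext w; simp
    rw [this, iteratedDeriv_const_succ]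
    simp

lemma wD_gId_norm_le (R S : Fin 1 → ℕ) : (‖wD R S gId 0‖₊ : ℝ≥0∞) ≤ 1 := by
  by_cases hS : S 0 = 0
  · rw [show gId = (fun z : Fin 1 → ℂ => (fun w : ℂ => w) (z 0)) from rfl,
      wD_comp_S_zero _ differentiable_fun_id R S hS]
    calc (‖iteratedDeriv (R 0) (fun w : ℂ => w) ((0 : Fin 1 → ℂ) 0)‖₊ : ℝ≥0∞)
        = ENNReal.ofReal ‖iteratedDeriv (R 0) (fun w : ℂ => w) 0‖ := by
          rw [ofReal_norm]; rfl
      _ ≤ 1 := by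
          rw [show (1:ℝ≥0∞) = ENNReal.ofReal 1 by simp]
          exact ENNReal.ofReal_le_ofReal (norm_iter_id_le _)
  · rw [show gId = (fun z : Fin 1 → ℂ => (fun w : ℂ => w) (z 0)) from rfl,
      wD_comp_S_pos _ differentiable_fun_id R S hS]
    simp

lemma eq_zero_of_apply_zero {M : Fin 1 → ℕ} (h : M 0 = 0) : M = 0 := by
  funext i
  have : i = 0 := Subsingleton.elim i 0
  rw [this]; exact h

lemma h0_gId_le (ℏ : ℝ) (hℏ : 0 < ℏ) (R S : Fin 1 → ℕ) :
    h0 (0 : Fin 1 → ℂ) ℏ R S gId ≤ (ENNReal.ofReal (2*ℏ) + 1) ^ (R 0 + S 0 + 1) := by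
  have h2 : (0:ℝ) ≤ 2*ℏ := by linarith
  have hcollapse : h0 (0 : Fin 1 → ℂ) ℏ R S gId
      = ENNReal.ofReal ((2*ℏ)^(mAbs R + mAbs S + mAbs (0:Fin 1 → ℕ)))
          / (mFact (0:Fin 1 → ℕ) : ℝ≥0∞) * (‖wD R ((0:Fin 1 → ℕ) + S) gId 0‖₊ : ℝ≥0∞)^2 := by
    refine tsum_eq_single 0 ?_
    intro M hM
    have hM0 : M 0 ≠ 0 := fun h => hM (eq_zero_of_apply_zero h)
    have : wD R (M + S) gId = fun _ => 0 := by
      rw [show gId = (fun z : Fin 1 → ℂ => (fun w : ℂ => w) (z 0)) from rfl]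
      exact wD_comp_S_pos _ differentiable_fun_id R (M + S)
        (fun h => hM0 (Nat.eq_zero_of_add_eq_zero_right h))
    rw [this]
    simp
  rw [hcollapse]
  have e1 : mAbs R + mAbs S + mAbs (0:Fin 1 → ℕ) = R 0 + S 0 := by
    simp [mAbs_one]
  have e2 : ((mFact (0:Fin 1 → ℕ) : ℕ) : ℝ≥0∞) = 1 := by simp [mFact_one]
  have e3 : (0:Fin 1 → ℕ) + S = S := by simp
  rw [e1, e2, e3]
  calc ENNReal.ofReal ((2*ℏ)^(R 0 + S 0)) / 1 * (‖wD R S gId 0‖₊ : ℝ≥0∞)^2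
      ≤ ENNReal.ofReal ((2*ℏ)^(R 0 + S 0)) * 1 := by
        rw [div_one]
        refine mul_le_mul_right ?_ _
        calc (‖wD R S gId 0‖₊ : ℝ≥0∞)^2 ≤ 1^2 := pow_le_pow_left₀ zero_le (wD_gId_norm_le R S) 2
          _ = 1 := one_pow 2
    _ = ENNReal.ofReal (2*ℏ) ^ (R 0 + S 0) := by rw [mul_one, ENNReal.ofReal_pow h2]
    _ ≤ (ENNReal.ofReal (2*ℏ) + 1) ^ (R 0 + S 0) := pow_le_pow_left₀ zero_le le_self_add _
    _ ≤ (ENNReal.ofReal (2*ℏ) + 1) ^ (R 0 + S 0 + 1) :=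
        pow_le_pow_right' (le_add_self) (Nat.le_succ _)

/-! ### combinatorial sums -/

lemma Iic_pi_one (R : Fin 1 → ℕ) :
    Finset.Iic R = (Finset.Iic (R 0)).image (fun i => (fun _ : Fin 1 => i)) := by
  ext I
  simp only [Finset.mem_Iic, Finset.mem_image]
  constructor
  · intro h
    exact ⟨I 0, h 0, by funext i; rw [Subsingleton.elim i 0]⟩
  · rintro ⟨i, hi, rfl⟩
    intro j
    rw [Subsingleton.elim j 0]
    exact hi

lemma sum_mChoose (R : Fin 1 → ℕ) :
    ∑ I ∈ Finset.Iic R, ((mChoose R I : ℕ) : ℝ≥0∞) = 2 ^ (R 0) := by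
  rw [Iic_pi_one]
  rw [Finset.sum_image (by intro a _ b _ h; exact congrFun h 0)]
  have : ∀ i ∈ Finset.Iic (R 0), ((mChoose R (fun _ : Fin 1 => i) : ℕ) : ℝ≥0∞)
      = ((R 0).choose i : ℝ≥0∞) := by
    intro i _
    rw [mChoose_one]
  rw [Finset.sum_congr rfl this]
  have hnat : ∑ i ∈ Finset.Iic (R 0), (R 0).choose i = 2 ^ (R 0) := by
    have : Finset.Iic (R 0) = Finset.range (R 0 + 1) := by
      ext x; simp [Nat.lt_succ_iff]
    rw [this, Nat.sum_range_choose]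
  exact_mod_cast congrArg (Nat.cast : ℕ → ℝ≥0∞) hnat

lemma inner_bound (C : ℝ≥0∞) (hC : 1 ≤ C) (R T : Fin 1 → ℕ)
    (X : (Fin 1 → ℕ) → (Fin 1 → ℕ) → ℝ≥0∞)
    (hX : ∀ I J, X I J ≤ C ^ (I 0 + J 0 + 1)) :
    ∑ I ∈ Finset.Iic R, ∑ J ∈ Finset.Iic T,
        ((mChoose R I * mChoose T J : ℕ) : ℝ≥0∞) * X I J
      ≤ (2*C) ^ (R 0 + T 0 + 1) := by
  have step1 : ∑ I ∈ Finset.Iic R, ∑ J ∈ Finset.Iic T,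
      ((mChoose R I * mChoose T J : ℕ) : ℝ≥0∞) * X I J
      ≤ ∑ I ∈ Finset.Iic R, ∑ J ∈ Finset.Iic T,
      ((mChoose R I : ℕ) : ℝ≥0∞) * ((mChoose T J : ℕ) : ℝ≥0∞) * C ^ (R 0 + T 0 + 1) := by
    refine Finset.sum_le_sum fun I hI => Finset.sum_le_sum fun J hJ => ?_
    rw [Nat.cast_mul]
    refine mul_le_mul_right ?_ _
    refine (hX I J).trans (pow_le_pow_right' hC ?_)
    have hI' : I 0 ≤ R 0 := (Finset.mem_Iic.mp hI) 0
    have hJ' : J 0 ≤ T 0 := (Finset.mem_Iic.mp hJ) 0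
    omega
  refine step1.trans ?_
  have step2 : ∑ I ∈ Finset.Iic R, ∑ J ∈ Finset.Iic T,
      ((mChoose R I : ℕ) : ℝ≥0∞) * ((mChoose T J : ℕ) : ℝ≥0∞) * C ^ (R 0 + T 0 + 1)
      = (2:ℝ≥0∞) ^ (R 0) * 2 ^ (T 0) * C ^ (R 0 + T 0 + 1) := by
    rw [← sum_mChoose R, ← sum_mChoose T]
    simp_rw [mul_assoc, ← Finset.mul_sum, ← Finset.sum_mul]
  rw [step2]
  calc (2:ℝ≥0∞) ^ (R 0) * 2 ^ (T 0) * C ^ (R 0 + T 0 + 1)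
      ≤ 2 ^ (R 0 + T 0 + 1) * C ^ (R 0 + T 0 + 1) := by
        refine mul_le_mul_left ?_ _
        rw [← pow_add]
        exact pow_le_pow_right' one_le_two (Nat.le_succ _)
    _ = (2*C) ^ (R 0 + T 0 + 1) := (mul_pow 2 C _).symm

lemma E_ne_top (D : ℝ≥0∞) (hD : D ≠ ⊤) :
    ∑' k : ℕ, ((k.factorial : ℝ≥0∞))⁻¹ * D ^ k ≠ ⊤ := by
  set d := D.toReal with hd_def
  have hd : 0 ≤ d := ENNReal.toReal_nonneg
  have hterm : ∀ k : ℕ, ((k.factorial : ℝ≥0∞))⁻¹ * D ^ k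
      = ENNReal.ofReal (d ^ k / k.factorial) := by
    intro k
    have hfac : (0:ℝ) < (k.factorial : ℝ) := by exact_mod_cast k.factorial_pos
    rw [div_eq_mul_inv, ENNReal.ofReal_mul (pow_nonneg hd k), ENNReal.ofReal_pow hd,
      ENNReal.ofReal_toReal hD, ENNReal.ofReal_inv_of_pos hfac, ENNReal.ofReal_natCast,
      mul_comm]
  rw [tsum_congr hterm, ← ENNReal.ofReal_tsum_of_nonneg
    (fun k => div_nonneg (pow_nonneg hd k) (by positivity))
    (Real.summable_pow_div_factorial d)]
  exact ENNReal.ofReal_ne_top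

/-! ### the inductive bound for the identity function -/

lemma hSem_gId_bound (ℏ : ℝ) (hℏ : 0 < ℏ) (m : ℕ) :
    ∃ C : ℝ≥0∞, 1 ≤ C ∧ C ≠ ⊤ ∧
      ∀ ℓ (R S : Fin 1 → ℕ), hSem (0 : Fin 1 → ℂ) ℏ m ℓ R S gId ≤ C ^ (R 0 + S 0 + 1) := by
  induction m with
  | zero =>
    refine ⟨ENNReal.ofReal (2*ℏ) + 1, le_add_self, by simp [ENNReal.ofReal_ne_top, ENNReal.mul_eq_top], ?_⟩
    intro ℓ R S
    simp only [hSem]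
    exact h0_gId_le ℏ hℏ R S
  | succ m ih =>
    obtain ⟨C, hC1, hCt, hCb⟩ := ih
    set D : ℝ≥0∞ := 2 * C with hD_def
    have hD1 : 1 ≤ D := le_trans one_le_two (le_mul_of_one_le_right zero_le hC1)
    have hDt : D ≠ ⊤ := ENNReal.mul_ne_top (by simp) hCt
    set E : ℝ≥0∞ := ∑' k : ℕ, ((k.factorial : ℝ≥0∞))⁻¹ * (D^2) ^ k with hE_def
    have hEt : E ≠ ⊤ := E_ne_top (D^2) (ENNReal.pow_ne_top hDt)
    refine ⟨D^2 * (E + 1), ?_, ?_, ?_⟩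
    · exact one_le_mul (one_le_pow_of_one_le' hD1 2) le_add_self
    · exact ENNReal.mul_ne_top (ENNReal.pow_ne_top hDt) (by simp [hEt])
    intro ℓ R S
    have key : ∀ (X : (Fin 1 → ℕ) → (Fin 1 → ℕ) → ℝ≥0∞),
        (∀ I J, X I J ≤ C ^ (I 0 + J 0 + 1)) →
        ∑' N : Fin 1 → ℕ, (mFact N : ℝ≥0∞)⁻¹ *
          (∑ I ∈ Finset.Iic R, ∑ J ∈ Finset.Iic (N + S),
            ((mChoose R I * mChoose (N + S) J : ℕ) : ℝ≥0∞) * X I J) ^ 2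
          ≤ (D^2 * (E + 1)) ^ (R 0 + S 0 + 1) := by
      intro X hX
      have hterm : ∀ N : Fin 1 → ℕ, (mFact N : ℝ≥0∞)⁻¹ *
          (∑ I ∈ Finset.Iic R, ∑ J ∈ Finset.Iic (N + S),
            ((mChoose R I * mChoose (N + S) J : ℕ) : ℝ≥0∞) * X I J) ^ 2
          ≤ (D^2) ^ (R 0 + S 0 + 1) * (((N 0).factorial : ℝ≥0∞))⁻¹ * (D^2) ^ (N 0) := by
        intro N
        have hinner := inner_bound C hC1 R (N + S) X hX
        have hT : (N + S) 0 = N 0 + S 0 := rfl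
        have hsq : (∑ I ∈ Finset.Iic R, ∑ J ∈ Finset.Iic (N + S),
            ((mChoose R I * mChoose (N + S) J : ℕ) : ℝ≥0∞) * X I J) ^ 2
            ≤ (D^2) ^ (R 0 + S 0 + 1) * (D^2) ^ (N 0) := by
          calc (∑ I ∈ Finset.Iic R, ∑ J ∈ Finset.Iic (N + S),
              ((mChoose R I * mChoose (N + S) J : ℕ) : ℝ≥0∞) * X I J) ^ 2
              ≤ (D ^ (R 0 + (N + S) 0 + 1)) ^ 2 := pow_le_pow_left₀ zero_le hinner 2
            _ = (D^2) ^ (R 0 + S 0 + 1) * (D^2) ^ (N 0) := by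
                rw [← pow_mul, ← pow_mul, ← pow_mul, ← pow_add, hT]
                ring_nf
        calc (mFact N : ℝ≥0∞)⁻¹ * (∑ I ∈ Finset.Iic R, ∑ J ∈ Finset.Iic (N + S),
              ((mChoose R I * mChoose (N + S) J : ℕ) : ℝ≥0∞) * X I J) ^ 2
            ≤ (mFact N : ℝ≥0∞)⁻¹ * ((D^2) ^ (R 0 + S 0 + 1) * (D^2) ^ (N 0)) :=
              mul_le_mul_right hsq _
          _ = (D^2) ^ (R 0 + S 0 + 1) * (((N 0).factorial : ℝ≥0∞))⁻¹ * (D^2) ^ (N 0) := by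
              rw [mFact_one]
              ring
      calc ∑' N : Fin 1 → ℕ, (mFact N : ℝ≥0∞)⁻¹ *
            (∑ I ∈ Finset.Iic R, ∑ J ∈ Finset.Iic (N + S),
              ((mChoose R I * mChoose (N + S) J : ℕ) : ℝ≥0∞) * X I J) ^ 2
          ≤ ∑' N : Fin 1 → ℕ,
            (D^2) ^ (R 0 + S 0 + 1) * (((N 0).factorial : ℝ≥0∞))⁻¹ * (D^2) ^ (N 0) :=
            ENNReal.tsum_le_tsum hterm
        _ = (D^2) ^ (R 0 + S 0 + 1) * E := by
            rw [tsum_pi, hE_def, ← ENNReal.tsum_mul_left]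
            exact tsum_congr fun k => by ring
        _ ≤ (D^2) ^ (R 0 + S 0 + 1) * (E + 1) ^ (R 0 + S 0 + 1) := by
            refine mul_le_mul_right ?_ _
            exact le_trans le_self_add (le_self_pow₀ le_add_self (by omega))
        _ = (D^2 * (E + 1)) ^ (R 0 + S 0 + 1) := (mul_pow _ _ _).symm
    simp only [hSem]
    split
    · exact key _ (fun I J => hCb _ I J)
    · refine key _ (fun I J => ?_)
      have := hCb ((ℓ - 1)/2) J I
      rwa [Nat.add_comm (J 0) (I 0)] at this

/-! ### lower bound pieces for the bad function -/

def fBad : Fn 1 := fun z => Fent (z 0)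

lemma wD_fBad (N : Fin 1 → ℕ) : wD N 0 fBad 0 = iteratedDeriv (N 0) Fent 0 := by
  have := wD_comp_S_zero Fent Fent_diff N 0 rfl
  rw [show fBad = (fun z : Fin 1 → ℂ => Fent (z 0)) from rfl, this]
  rfl

lemma pow_identity (x y c : ℝ) (hx : 0 < x) (hy : 0 < y) (hy4 : y ^ (4:ℕ) = x) :
    x⁻¹ * (c * (x * y⁻¹)^2)^2 = (c * x)^2 := by
  have hx' : x ≠ 0 := hx.ne'
  have hy' : y ≠ 0 := hy.ne'
  field_simp
  linear_combination (-c^2) * hy4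

lemma real_identity (ℏ : ℝ) (hℏ : 0 < ℏ) (k : ℕ) :
    ((k.factorial : ℝ))⁻¹ * ((2*ℏ)^k *
      ((k.factorial : ℝ) * ((k.factorial : ℝ) ^ ((1:ℝ)/4))⁻¹)^2)^2
    = ((2*ℏ)^k * (k.factorial : ℝ))^2 := by
  have hx : (0:ℝ) < (k.factorial : ℝ) := by exact_mod_cast k.factorial_pos
  have hy : (0:ℝ) < (k.factorial : ℝ) ^ ((1:ℝ)/4) := Real.rpow_pos_of_pos hx _
  have hy4 : ((k.factorial : ℝ) ^ ((1:ℝ)/4)) ^ (4:ℕ) = (k.factorial : ℝ) := by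
    rw [← Real.rpow_natCast ((k.factorial : ℝ) ^ ((1:ℝ)/4)) 4, ← Real.rpow_mul hx.le]
    norm_num
  exact pow_identity _ _ _ hx hy hy4

lemma term_lower (ℏ : ℝ) (hℏ : 0 < ℏ) (N : Fin 1 → ℕ) :
    ENNReal.ofReal (((2*ℏ)^(N 0) * ((N 0).factorial : ℝ))^2)
      ≤ (mFact N : ℝ≥0∞)⁻¹ *
        (ENNReal.ofReal ((2*ℏ)^(N 0)) * (‖wD N 0 fBad 0‖₊ : ℝ≥0∞)^2)^2 := by
  set k := N 0
  have h2 : (0:ℝ) ≤ (2*ℏ)^k := by positivity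
  have hx : (0:ℝ) < (k.factorial : ℝ) := by exact_mod_cast k.factorial_pos
  have hnorm : ‖wD N 0 fBad 0‖ = (k.factorial : ℝ) * ((k.factorial : ℝ) ^ ((1:ℝ)/4))⁻¹ := by
    rw [wD_fBad, norm_iteratedDeriv_Fent]
  have hrw : (ENNReal.ofReal ((2*ℏ)^k) * (‖wD N 0 fBad 0‖₊ : ℝ≥0∞)^2)^2
      = ENNReal.ofReal (((2*ℏ)^k * ‖wD N 0 fBad 0‖^2)^2) := by
    rw [← enorm_eq_nnnorm, ← ofReal_norm, ← ENNReal.ofReal_pow (norm_nonneg _),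
      ← ENNReal.ofReal_mul h2, ← ENNReal.ofReal_pow (by positivity)]
  rw [hrw, mFact_one]
  have hfac : (mFact N : ℝ≥0∞) = ENNReal.ofReal (k.factorial : ℝ) := by
    rw [mFact_one, ENNReal.ofReal_natCast]
  rw [show ((((N 0).factorial : ℕ) : ℝ≥0∞))⁻¹ = ENNReal.ofReal ((k.factorial : ℝ))⁻¹ from by
    rw [ENNReal.ofReal_inv_of_pos hx, ENNReal.ofReal_natCast],
    ← ENNReal.ofReal_mul (by positivity)]
  apply ENNReal.ofReal_le_ofReal
  rw [hnorm]
  rw [real_identity ℏ hℏ k]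

lemma hSem_fBad_top (ℏ : ℝ) (hℏ : 0 < ℏ) :
    hSem (0 : Fin 1 → ℂ) ℏ 1 1 (0 : Fin 1 → ℕ) 0 fBad = ⊤ := by
  rw [eq_top_iff]
  have hstep : ∀ N : Fin 1 → ℕ,
      ENNReal.ofReal (((2*ℏ)^(N 0) * ((N 0).factorial : ℝ))^2)
        ≤ (mFact N : ℝ≥0∞)⁻¹ *
          (∑ I ∈ Finset.Iic (0 : Fin 1 → ℕ), ∑ J ∈ Finset.Iic (N + 0),
            ((mChoose (0 : Fin 1 → ℕ) I * mChoose (N + 0) J : ℕ) : ℝ≥0∞) *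
              hSem (0 : Fin 1 → ℂ) ℏ 0 ((1-1)/2) J I fBad) ^ 2 := by
    intro N
    have hNmem : N ∈ Finset.Iic (N + 0) := Finset.mem_Iic.mpr (by simp)
    have h0mem : (0 : Fin 1 → ℕ) ∈ Finset.Iic (0 : Fin 1 → ℕ) := Finset.mem_Iic.mpr le_rfl
    have hcoeff : ((mChoose (0 : Fin 1 → ℕ) 0 * mChoose (N + 0) N : ℕ) : ℝ≥0∞) = 1 := by
      simp [mChoose_one]
    have hinner : hSem (0 : Fin 1 → ℂ) ℏ 0 ((1-1)/2) N 0 fBad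
        ≤ ∑ I ∈ Finset.Iic (0 : Fin 1 → ℕ), ∑ J ∈ Finset.Iic (N + 0),
          ((mChoose (0 : Fin 1 → ℕ) I * mChoose (N + 0) J : ℕ) : ℝ≥0∞) *
            hSem (0 : Fin 1 → ℂ) ℏ 0 ((1-1)/2) J I fBad := by
      calc hSem (0 : Fin 1 → ℂ) ℏ 0 ((1-1)/2) N 0 fBad
          = ((mChoose (0 : Fin 1 → ℕ) 0 * mChoose (N + 0) N : ℕ) : ℝ≥0∞) *
              hSem (0 : Fin 1 → ℂ) ℏ 0 ((1-1)/2) N 0 fBad := by rw [hcoeff, one_mul]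
        _ ≤ ∑ J ∈ Finset.Iic (N + 0),
              ((mChoose (0 : Fin 1 → ℕ) 0 * mChoose (N + 0) J : ℕ) : ℝ≥0∞) *
                hSem (0 : Fin 1 → ℂ) ℏ 0 ((1-1)/2) J 0 fBad :=
            Finset.single_le_sum
              (f := fun J => ((mChoose (0 : Fin 1 → ℕ) 0 * mChoose (N + 0) J : ℕ) : ℝ≥0∞) *
                hSem (0 : Fin 1 → ℂ) ℏ 0 ((1-1)/2) J 0 fBad)
              (fun J _ => zero_le) hNmem
        _ ≤ _ := Finset.single_le_sum
              (f := fun I => ∑ J ∈ Finset.Iic (N + 0),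
                ((mChoose (0 : Fin 1 → ℕ) I * mChoose (N + 0) J : ℕ) : ℝ≥0∞) *
                  hSem (0 : Fin 1 → ℂ) ℏ 0 ((1-1)/2) J I fBad)
              (fun I _ => zero_le) h0mem
    have hbase : ENNReal.ofReal ((2*ℏ)^(N 0)) * (‖wD N 0 fBad 0‖₊ : ℝ≥0∞)^2
        ≤ hSem (0 : Fin 1 → ℂ) ℏ 0 ((1-1)/2) N 0 fBad := by
      simp only [hSem]
      have := ENNReal.le_tsum (f := fun M : Fin 1 → ℕ =>
        ENNReal.ofReal ((2*ℏ)^(mAbs N + mAbs (0:Fin 1 → ℕ) + mAbs M)) / (mFact M : ℝ≥0∞) *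
          (‖wD N (M + 0) fBad 0‖₊ : ℝ≥0∞)^2) 0
      refine le_trans (le_of_eq ?_) this
      have e1 : mAbs N + mAbs (0:Fin 1 → ℕ) + mAbs (0:Fin 1 → ℕ) = N 0 := by simp [mAbs_one]
      have e2 : (mFact (0:Fin 1 → ℕ) : ℝ≥0∞) = 1 := by simp [mFact_one]
      have e3 : (0:Fin 1 → ℕ) + 0 = (0:Fin 1 → ℕ) := by simp
      rw [e1, e2, e3, div_one]
    calc ENNReal.ofReal (((2*ℏ)^(N 0) * ((N 0).factorial : ℝ))^2)
        ≤ (mFact N : ℝ≥0∞)⁻¹ *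
            (ENNReal.ofReal ((2*ℏ)^(N 0)) * (‖wD N 0 fBad 0‖₊ : ℝ≥0∞)^2)^2 :=
          term_lower ℏ hℏ N
      _ ≤ _ := by
          refine mul_le_mul_right ?_ _
          exact pow_le_pow_left₀ zero_le (hbase.trans hinner) 2
  calc (⊤:ℝ≥0∞) = ∑' k : ℕ, ENNReal.ofReal (((2*ℏ)^k * (k.factorial : ℝ))^2) :=
        (tsum_top ℏ hℏ).symm
    _ = ∑' N : Fin 1 → ℕ, ENNReal.ofReal (((2*ℏ)^(N 0) * ((N 0).factorial : ℝ))^2) :=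
        (tsum_pi (fun N => ENNReal.ofReal (((2*ℏ)^(N 0) * ((N 0).factorial : ℝ))^2))).symm
    _ ≤ _ := ENNReal.tsum_le_tsum hstep
    _ = _ := by
        simp only [hSem]
        rw [if_neg (by norm_num)]

/-- the entire function Σ_r z^r/(r!)^{1/4} has infinite seminorm
‖·‖^{0,ℏ}_{1,1,0,0}, hence does not belong to Ã_{0,ℏ}, although z does. -/
theorem bad_entire_function (ℏ : ℝ) (hℏ : 0 < ℏ) :
    wNorm (0 : Fin 1 → ℂ) ℏ 1 1 0 0
        (fun z => ∑' r : ℕ, (z 0)^r / ((((r.factorial : ℝ) ^ ((1:ℝ)/4) : ℝ) : ℂ))) = ⊤ ∧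
    (fun z : Fin 1 → ℂ =>
      ∑' r : ℕ, (z 0)^r / ((((r.factorial : ℝ) ^ ((1:ℝ)/4) : ℝ) : ℂ))) ∉ tA 0 ℏ ∧
    (fun z : Fin 1 → ℂ => z 0) ∈ tA 0 ℏ := by
  have hfB : (fun z : Fin 1 → ℂ =>
      ∑' r : ℕ, (z 0)^r / ((((r.factorial : ℝ) ^ ((1:ℝ)/4) : ℝ) : ℂ))) = fBad := rfl
  have hw : wNorm (0 : Fin 1 → ℂ) ℏ 1 1 0 0 fBad = ⊤ := by
    rw [wNorm, hSem_fBad_top ℏ hℏ]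
    exact ENNReal.top_rpow_of_pos (by positivity)
  refine ⟨?_, ?_, ?_⟩
  · rw [hfB]; exact hw
  · rw [hfB]
    rintro ⟨-, hall⟩
    have := hall 1 1 0 0 (by norm_num)
    rw [hw] at this
    exact lt_irrefl ⊤ this
  · constructor
    · have h := contDiff_pi.mp (contDiff_id (𝕜 := ℝ) (E := Fin 1 → ℂ) (n := (⊤ : ℕ∞))) 0
      exact h
    · intro m ℓ R S _
      obtain ⟨C, hC1, hCt, hCb⟩ := hSem_gId_bound ℏ hℏ m
      rw [wNorm]
      refine ENNReal.rpow_lt_top_of_nonneg (by positivity) ?_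
      exact ne_top_of_le_ne_top (ENNReal.pow_ne_top hCt) (hCb ℓ R S)

end WickPaper
end
end
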